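/- arXiv:1912.07168 — 9 statements merged into one kernel-verified Lean document; each statement's English description precedes it below -/
import Mathlib

section
/- Let c > 0, θ ∈ (0,1), x0 ∈ Ω and v0 ∈ ℝ^d. Then there exists t0 > 0 such that there is exactly one continuous function x : [0, t0] → ℝ^d with x(s) ∈ Ω for all s ∈ [0, t0] satisfying, for all t ∈ [0, t0], the integral equation x(t) = x0 + ∫₀ᵗ F(s) ds, where F(s) = −[√(Λ_θ(x(s))) / (∫₀ˢ √(Λ_θ(x(w))) dw + c)]·(2x(s) + ∫₀ˢ √(Λ_θ(x(w)))·(∫₀ʷ √(Λ_θ(x(u))) du + c)·∇Φ(x(w)) dw − v0) − Λ_θ(x(s))·∇Φ(x(s)). In particular this x is continuously differentiable on [0, t0] with x′(t) = F(t) and x(0) = x0. -/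
/-!
Along a solution, `F` depends on the past only through the running integrals
`A(s) = ∫₀ˢ √Λ_θ(x)` and `B(s) = ∫₀ˢ √Λ_θ(x) (A + c) ∇Φ(x)`. Adjoining them as state variables
turns the integral equation into the autonomous ODE `z' = G(z)` for `z = (x, A, B)`, whose
vector field `G` is `C¹` wherever `∇Φ(x) ≠ 0` and `A + c ≠ 0`, since `Λ_θ` is a real power of
`‖∇Φ‖` and `Φ` is `C²`. Picard–Lindelöf at `(x0, 0, 0)` gives a local solution whose first
component solves the integral equation. Conversely, every continuous `Ω`-valued solution `x`
lifts to a solution `(x, A, B)` of `z' = G(z)` with `A ≥ 0`, where `G` is locally Lipschitz,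
and Gronwall's inequality, propagated along `[0, t0]`, makes two such lifts coincide.
-/

/-- `Λ_θ(x) = θ^{1/p} ‖∇Φ(x)‖^{-(p-1)/p}`. -/
noncomputable def LamTheta (d p : ℕ) (θ : ℝ) (Φ : EuclideanSpace ℝ (Fin d) → ℝ)
    (x : EuclideanSpace ℝ (Fin d)) : ℝ :=
  θ ^ (1 / (p : ℝ)) * ‖gradient Φ x‖ ^ (-(((p : ℝ) - 1) / (p : ℝ)))

/-- The vector field of the autonomous reformulation of the closed-loop control system. -/
noncomputable def Fvec (d p : ℕ) (θ c : ℝ) (Φ : EuclideanSpace ℝ (Fin d) → ℝ)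
    (v0 : EuclideanSpace ℝ (Fin d)) (x : ℝ → EuclideanSpace ℝ (Fin d)) (s : ℝ) :
    EuclideanSpace ℝ (Fin d) :=
  -((Real.sqrt (LamTheta d p θ Φ (x s)) /
        ((∫ w in (0:ℝ)..s, Real.sqrt (LamTheta d p θ Φ (x w))) + c)) •
      ((2 : ℝ) • x s +
        (∫ w in (0:ℝ)..s,
          (Real.sqrt (LamTheta d p θ Φ (x w)) *
            ((∫ u in (0:ℝ)..w, Real.sqrt (LamTheta d p θ Φ (x u))) + c)) •
            gradient Φ (x w)) - v0))
    - LamTheta d p θ Φ (x s) • gradient Φ (x s)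

open Set Filter Topology intervalIntegral

section General

variable {E F : Type*} [NormedAddCommGroup E] [NormedSpace ℝ E]

theorem HasDerivAt.fst [NormedAddCommGroup F] [NormedSpace ℝ F] {f : ℝ → E × F} {f' : E × F}
    {t : ℝ} (h : HasDerivAt f f' t) : HasDerivAt (fun s => (f s).1) f'.1 t :=
  (hasFDerivAt_fst (p := f t)).comp_hasDerivAt t h

theorem HasDerivAt.snd [NormedAddCommGroup F] [NormedSpace ℝ F] {f : ℝ → E × F} {f' : E × F}
    {t : ℝ} (h : HasDerivAt f f' t) : HasDerivAt (fun s => (f s).2) f'.2 t :=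
  (hasFDerivAt_snd (p := f t)).comp_hasDerivAt t h

theorem ContDiff.gradient [NormedAddCommGroup F] [InnerProductSpace ℝ F] [CompleteSpace F]
    {f : F → ℝ} {m n : WithTop ℕ∞} (hf : ContDiff ℝ n f) (hmn : m + 1 ≤ n) :
    ContDiff ℝ m (gradient f) :=
  (InnerProductSpace.toDual ℝ F).symm.contDiff.comp (hf.fderiv_right hmn)

theorem hasDerivWithinAt_integral_Icc [CompleteSpace E] {h : ℝ → E} {a b t : ℝ}
    (hh : ContinuousOn h (Icc a b)) (ht : t ∈ Icc a b) :
    HasDerivWithinAt (fun u => ∫ s in a..u, h s) (h t) (Icc a b) t := by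
  have : Fact (t ∈ Icc a b) := ⟨ht⟩
  exact integral_hasDerivWithinAt_right
    (hh.mono (uIcc_subset_Icc (left_mem_Icc.2 (ht.1.trans ht.2)) ht)).intervalIntegrable
    (hh.stronglyMeasurableAtFilter_nhdsWithin measurableSet_Icc t) (hh t ht)

theorem eq_add_integral_of_hasDerivAt [CompleteSpace E] {f f' : ℝ → E} {a b t : ℝ}
    (hf : ∀ s ∈ Icc a b, HasDerivAt f (f' s) s) (hf' : ContinuousOn f' (Icc a b))
    (ht : t ∈ Icc a b) : f t = f a + ∫ s in a..t, f' s := by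
  have hsub : uIcc a t ⊆ Icc a b := by
    rw [uIcc_of_le ht.1]
    exact Icc_subset_Icc_right ht.2
  rw [integral_eq_sub_of_hasDerivAt (fun s hs => hf s (hsub hs))
    (hf'.mono hsub).intervalIntegrable]
  abel

theorem ContDiffAt.exists_forall_mem_Icc_hasDerivAt_mem [CompleteSpace E] {v : E → E} {z₀ : E}
    (hv : ContDiffAt ℝ 1 v z₀) {U : Set E} (hU : U ∈ 𝓝 z₀) :
    ∃ T > 0, ∃ f : ℝ → E, f 0 = z₀ ∧ ∀ t ∈ Icc 0 T, HasDerivAt f (v (f t)) t ∧ f t ∈ U := by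
  obtain ⟨f, hf0, ε, hε, hf⟩ :=
    hv.exists_forall_mem_closedBall_exists_eq_forall_mem_Ioo_hasDerivAt₀ 0
  have hIoo : Ioo (0 - ε) (0 + ε) ∈ 𝓝 (0 : ℝ) := Ioo_mem_nhds (by linarith) (by linarith)
  have hmapsTo : ∀ᶠ t in 𝓝 (0 : ℝ), f t ∈ U :=
    (hf 0 (mem_of_mem_nhds hIoo)).continuousAt.preimage_mem_nhds (hf0 ▸ hU)
  obtain ⟨T, hT, hsub⟩ := mem_nhdsGE_iff_exists_Icc_subset.1
    (nhdsWithin_le_nhds ((eventually_mem_set.2 hIoo).mono hf |>.and hmapsTo))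
  exact ⟨T, hT, f, hf0, hsub⟩

theorem ODE_solution_unique_of_mem_Icc_right_of_lipschitzOnWith_nhds {v : E → E}
    {f g : ℝ → E} {a b : ℝ} (hv : ∀ t ∈ Ico a b, ∃ K, ∃ s ∈ 𝓝 (f t), LipschitzOnWith K v s)
    (hf : ContinuousOn f (Icc a b))
    (hf' : ∀ t ∈ Ico a b, HasDerivWithinAt f (v (f t)) (Ici t) t)
    (hg : ContinuousOn g (Icc a b))
    (hg' : ∀ t ∈ Ico a b, HasDerivWithinAt g (v (g t)) (Ici t) t)
    (ha : f a = g a) : EqOn f g (Icc a b) := by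
  have hclosed : IsClosed ({t | f t = g t} ∩ Icc a b) := by
    rw [inter_comm]
    exact (hf.prodMk hg).preimage_isClosed_of_isClosed isClosed_Icc isClosed_diagonal
  refine hclosed.Icc_subset_of_forall_mem_nhdsWithin ha fun t ⟨hfg, ht⟩ => ?_
  obtain ⟨K, s, hs, hlip⟩ := hv t ht
  have hIcc : Icc a b ∈ 𝓝[≥] t := Icc_mem_nhdsGE_of_mem ht
  have hfs : ∀ᶠ u in 𝓝[≥] t, f u ∈ s :=
    ((hf t (Ico_subset_Icc_self ht)).mono_of_mem_nhdsWithin hIcc).preimage_mem_nhdsWithin hs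
  have hgs : ∀ᶠ u in 𝓝[≥] t, g u ∈ s :=
    ((hg t (Ico_subset_Icc_self ht)).mono_of_mem_nhdsWithin hIcc).preimage_mem_nhdsWithin
      (hfg ▸ hs)
  obtain ⟨u, htu, hsub⟩ := mem_nhdsGE_iff_exists_Icc_subset.1
    ((eventually_mem_set.2 hIcc).and (hfs.and hgs))
  have hIcc' : Icc t u ⊆ Icc a b := fun r hr => (hsub hr).1
  have hIco : Ico t u ⊆ Ico a b := fun r hr =>
    ⟨(hIcc' (Ico_subset_Icc_self hr)).1, hr.2.trans_le (hIcc' (right_mem_Icc.2 htu.le)).2⟩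
  have heq : EqOn f g (Icc t u) :=
    ODE_solution_unique_of_mem_Icc_right (v := fun _ => v) (s := fun _ => s) (fun _ _ => hlip)
      (hf.mono hIcc') (fun r hr => hf' r (hIco hr))
      (fun r hr => (hsub (Ico_subset_Icc_self hr)).2.1)
      (hg.mono hIcc') (fun r hr => hg' r (hIco hr))
      (fun r hr => (hsub (Ico_subset_Icc_self hr)).2.2) hfg
  exact mem_of_superset (Ioo_mem_nhdsGT htu) (Ioo_subset_Icc_self.trans heq)

end General

section IntegralEquation

variable {d p : ℕ} {θ c : ℝ} {Φ : EuclideanSpace ℝ (Fin d) → ℝ}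
  {v0 x0 : EuclideanSpace ℝ (Fin d)}

theorem lamTheta_pos (hθ : 0 < θ) {x : EuclideanSpace ℝ (Fin d)} (hx : gradient Φ x ≠ 0) :
    0 < LamTheta d p θ Φ x :=
  mul_pos (Real.rpow_pos_of_pos hθ _) (Real.rpow_pos_of_pos (norm_pos_iff.2 hx) _)

theorem contDiffAt_lamTheta (hΦ : ContDiff ℝ 2 Φ) {x : EuclideanSpace ℝ (Fin d)}
    (hx : gradient Φ x ≠ 0) : ContDiffAt ℝ 1 (LamTheta d p θ Φ) x :=
  contDiffAt_const.mul (((hΦ.gradient le_rfl).contDiffAt.norm ℝ hx).rpow_const_of_ne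
    (norm_ne_zero_iff.2 hx))

theorem contDiffAt_sqrt_lamTheta (hθ : 0 < θ) (hΦ : ContDiff ℝ 2 Φ)
    {x : EuclideanSpace ℝ (Fin d)} (hx : gradient Φ x ≠ 0) :
    ContDiffAt ℝ 1 (fun y => Real.sqrt (LamTheta d p θ Φ y)) x :=
  (contDiffAt_lamTheta hΦ hx).sqrt (lamTheta_pos hθ hx).ne'

variable (d p θ c Φ v0 x0)

noncomputable def sqrtLamIntegral (y : ℝ → EuclideanSpace ℝ (Fin d)) (s : ℝ) : ℝ :=
  ∫ w in (0:ℝ)..s, Real.sqrt (LamTheta d p θ Φ (y w))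

noncomputable def gradIntegral (y : ℝ → EuclideanSpace ℝ (Fin d)) (s : ℝ) :
    EuclideanSpace ℝ (Fin d) :=
  ∫ w in (0:ℝ)..s, (Real.sqrt (LamTheta d p θ Φ (y w)) * (sqrtLamIntegral d p θ Φ y w + c)) •
    gradient Φ (y w)

noncomputable def augCurve (y : ℝ → EuclideanSpace ℝ (Fin d)) (s : ℝ) :
    EuclideanSpace ℝ (Fin d) × ℝ × EuclideanSpace ℝ (Fin d) :=
  (y s, sqrtLamIntegral d p θ Φ y s, gradIntegral d p θ c Φ y s)

noncomputable def augField (z : EuclideanSpace ℝ (Fin d) × ℝ × EuclideanSpace ℝ (Fin d)) :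
    EuclideanSpace ℝ (Fin d) × ℝ × EuclideanSpace ℝ (Fin d) :=
  (-((Real.sqrt (LamTheta d p θ Φ z.1) / (z.2.1 + c)) • ((2 : ℝ) • z.1 + z.2.2 - v0))
      - LamTheta d p θ Φ z.1 • gradient Φ z.1,
    Real.sqrt (LamTheta d p θ Φ z.1),
    (Real.sqrt (LamTheta d p θ Φ z.1) * (z.2.1 + c)) • gradient Φ z.1)

def IsIntegralSolution (T : ℝ) (y : ℝ → EuclideanSpace ℝ (Fin d)) : Prop :=
  ContinuousOn y (Icc 0 T) ∧ (∀ s ∈ Icc (0:ℝ) T, gradient Φ (y s) ≠ 0) ∧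
    ∀ t ∈ Icc (0:ℝ) T, y t = x0 + ∫ s in (0:ℝ)..t, Fvec d p θ c Φ v0 y s

variable {d p θ c Φ v0 x0}

theorem fvec_eq_augField_augCurve (y : ℝ → EuclideanSpace ℝ (Fin d)) (s : ℝ) :
    Fvec d p θ c Φ v0 y s = (augField d p θ c Φ v0 (augCurve d p θ c Φ y s)).1 :=
  rfl

theorem sqrtLamIntegral_nonneg (y : ℝ → EuclideanSpace ℝ (Fin d)) {s : ℝ} (hs : 0 ≤ s) :
    0 ≤ sqrtLamIntegral d p θ Φ y s :=
  integral_nonneg hs fun _ _ => Real.sqrt_nonneg _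

theorem contDiffAt_augField (hθ : 0 < θ) (hΦ : ContDiff ℝ 2 Φ)
    {z : EuclideanSpace ℝ (Fin d) × ℝ × EuclideanSpace ℝ (Fin d)}
    (hz : gradient Φ z.1 ≠ 0) (hzc : z.2.1 + c ≠ 0) :
    ContDiffAt ℝ 1 (augField d p θ c Φ v0) z := by
  have hσ := (contDiffAt_sqrt_lamTheta (p := p) hθ hΦ hz).comp z contDiffAt_fst
  have hΛ := (contDiffAt_lamTheta (p := p) (θ := θ) hΦ hz).comp z contDiffAt_fst
  have hg := ((hΦ.gradient (m := 1) le_rfl).contDiffAt (x := z.1)).comp z contDiffAt_fst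
  unfold augField
  fun_prop (disch := assumption)

theorem continuousOn_sqrt_lamTheta_comp (hθ : 0 < θ) (hΦ : ContDiff ℝ 2 Φ) {S : Set ℝ}
    {y : ℝ → EuclideanSpace ℝ (Fin d)} (hy : ContinuousOn y S)
    (hΩ : ∀ s ∈ S, gradient Φ (y s) ≠ 0) :
    ContinuousOn (fun s => Real.sqrt (LamTheta d p θ Φ (y s))) S := fun s hs =>
  (contDiffAt_sqrt_lamTheta hθ hΦ (hΩ s hs)).continuousAt.comp_continuousWithinAt (hy s hs)

namespace IsIntegralSolution

variable {T : ℝ} {y : ℝ → EuclideanSpace ℝ (Fin d)}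
  (hy : IsIntegralSolution d p θ c Φ v0 x0 T y) (hθ : 0 < θ) (hΦ : ContDiff ℝ 2 Φ)

include hy in
theorem apply_zero (hT : 0 ≤ T) : y 0 = x0 := by
  simpa using hy.2.2 0 ⟨le_rfl, hT⟩

include hy hθ hΦ

theorem hasDerivWithinAt_sqrtLamIntegral {t : ℝ} (ht : t ∈ Icc 0 T) :
    HasDerivWithinAt (sqrtLamIntegral d p θ Φ y) (Real.sqrt (LamTheta d p θ Φ (y t)))
      (Icc 0 T) t :=
  hasDerivWithinAt_integral_Icc (continuousOn_sqrt_lamTheta_comp hθ hΦ hy.1 hy.2.1) ht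

theorem hasDerivWithinAt_gradIntegral {t : ℝ} (ht : t ∈ Icc 0 T) :
    HasDerivWithinAt (gradIntegral d p θ c Φ y)
      ((Real.sqrt (LamTheta d p θ Φ (y t)) * (sqrtLamIntegral d p θ Φ y t + c)) •
        gradient Φ (y t)) (Icc 0 T) t := by
  refine hasDerivWithinAt_integral_Icc (ContinuousOn.smul (ContinuousOn.mul
    (continuousOn_sqrt_lamTheta_comp hθ hΦ hy.1 hy.2.1) ?_) ?_) ht
  · exact fun s hs => (hy.hasDerivWithinAt_sqrtLamIntegral hθ hΦ hs).continuousWithinAt.add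
      continuousWithinAt_const
  · exact (hΦ.gradient (m := 0) (by norm_num)).continuous.comp_continuousOn hy.1

theorem continuousOn_augCurve : ContinuousOn (augCurve d p θ c Φ y) (Icc 0 T) :=
  hy.1.prodMk <| ContinuousOn.prodMk
    (fun _ hs => (hy.hasDerivWithinAt_sqrtLamIntegral hθ hΦ hs).continuousWithinAt)
    (fun _ hs => (hy.hasDerivWithinAt_gradIntegral hθ hΦ hs).continuousWithinAt)

theorem contDiffAt_augField_augCurve (hc : 0 < c) {s : ℝ} (hs : s ∈ Icc 0 T) :
    ContDiffAt ℝ 1 (augField d p θ c Φ v0) (augCurve d p θ c Φ y s) :=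
  contDiffAt_augField hθ hΦ (hy.2.1 s hs)
    (add_pos_of_nonneg_of_pos (sqrtLamIntegral_nonneg y hs.1) hc).ne'

theorem continuousOn_fvec (hc : 0 < c) : ContinuousOn (Fvec d p θ c Φ v0 y) (Icc 0 T) :=
  fun s hs => continuous_fst.continuousAt.comp_continuousWithinAt <|
    (hy.contDiffAt_augField_augCurve hθ hΦ hc hs).continuousAt.comp_continuousWithinAt
      (hy.continuousOn_augCurve hθ hΦ s hs)

theorem hasDerivWithinAt (hc : 0 < c) {t : ℝ} (ht : t ∈ Icc 0 T) :
    HasDerivWithinAt y (Fvec d p θ c Φ v0 y t) (Icc 0 T) t :=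
  ((hasDerivWithinAt_integral_Icc (hy.continuousOn_fvec hθ hΦ hc) ht).const_add x0).congr
    hy.2.2 (hy.2.2 t ht)

theorem hasDerivWithinAt_augCurve (hc : 0 < c) {t : ℝ} (ht : t ∈ Icc 0 T) :
    HasDerivWithinAt (augCurve d p θ c Φ y)
      (augField d p θ c Φ v0 (augCurve d p θ c Φ y t)) (Icc 0 T) t :=
  (hy.hasDerivWithinAt hθ hΦ hc ht).prodMk <|
    (hy.hasDerivWithinAt_sqrtLamIntegral hθ hΦ ht).prodMk
      (hy.hasDerivWithinAt_gradIntegral hθ hΦ ht)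

theorem eqOn (hc : 0 < c) (hT : 0 ≤ T) {z : ℝ → EuclideanSpace ℝ (Fin d)}
    (hz : IsIntegralSolution d p θ c Φ v0 x0 T z) : EqOn y z (Icc 0 T) := by
  have hderiv : ∀ {w}, IsIntegralSolution d p θ c Φ v0 x0 T w → ∀ t ∈ Ico 0 T,
      HasDerivWithinAt (augCurve d p θ c Φ w)
        (augField d p θ c Φ v0 (augCurve d p θ c Φ w t)) (Ici t) t := fun hw t ht =>
    (hw.hasDerivWithinAt_augCurve hθ hΦ hc (Ico_subset_Icc_self ht)).mono_of_mem_nhdsWithin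
      (Icc_mem_nhdsGE_of_mem ht)
  have hzero : augCurve d p θ c Φ y 0 = augCurve d p θ c Φ z 0 := by
    simp [augCurve, sqrtLamIntegral, gradIntegral, hy.apply_zero hT, hz.apply_zero hT]
  have haug := ODE_solution_unique_of_mem_Icc_right_of_lipschitzOnWith_nhds
    (fun t ht => (hy.contDiffAt_augField_augCurve hθ hΦ hc
      (Ico_subset_Icc_self ht)).exists_lipschitzOnWith)
    (hy.continuousOn_augCurve hθ hΦ) (hderiv hy) (hz.continuousOn_augCurve hθ hΦ) (hderiv hz)
    hzero
  exact fun t ht => congrArg Prod.fst (haug ht)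

end IsIntegralSolution

section Existence

variable {T : ℝ} {f : ℝ → EuclideanSpace ℝ (Fin d) × ℝ × EuclideanSpace ℝ (Fin d)}
  (hθ : 0 < θ) (hΦ : ContDiff ℝ 2 Φ) (hf0 : f 0 = (x0, 0, 0))
  (hf : ∀ t ∈ Icc 0 T, HasDerivAt f (augField d p θ c Φ v0 (f t)) t ∧
    gradient Φ (f t).1 ≠ 0 ∧ 0 < (f t).2.1 + c)

include hθ hΦ hf0 hf

omit hf0 in
theorem continuousOn_augField_comp :
    ContinuousOn (fun s => augField d p θ c Φ v0 (f s)) (Icc 0 T) := fun s hs =>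
  ((contDiffAt_augField hθ hΦ (hf s hs).2.1 (hf s hs).2.2.ne').continuousAt.comp
    (hf s hs).1.continuousAt).continuousWithinAt

theorem augCurve_fst_eq {t : ℝ} (ht : t ∈ Icc 0 T) :
    augCurve d p θ c Φ (fun s => (f s).1) t = f t := by
  have hfv := continuousOn_augField_comp hθ hΦ hf
  have hA : ∀ s ∈ Icc 0 T, sqrtLamIntegral d p θ Φ (fun s => (f s).1) s = (f s).2.1 := by
    intro s hs
    rw [eq_add_integral_of_hasDerivAt (fun r hr => (hf r hr).1.snd.fst)
      (continuous_snd.fst.comp_continuousOn hfv) hs, hf0, zero_add]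
    rfl
  have hB : gradIntegral d p θ c Φ (fun s => (f s).1) t = (f t).2.2 := by
    rw [eq_add_integral_of_hasDerivAt (fun r hr => (hf r hr).1.snd.snd)
      (continuous_snd.snd.comp_continuousOn hfv) ht, hf0, zero_add]
    refine integral_congr fun s hs => ?_
    have hs' := uIcc_subset_Icc (left_mem_Icc.2 (ht.1.trans ht.2)) ht hs
    simp only [augField, hA s hs']
  exact Prod.ext rfl (Prod.ext (hA t ht) hB)

theorem isIntegralSolution_fst : IsIntegralSolution d p θ c Φ v0 x0 T (fun s => (f s).1) := by
  refine ⟨continuous_fst.comp_continuousOn (HasDerivAt.continuousOn fun s hs => (hf s hs).1),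
    fun s hs => (hf s hs).2.1, fun t ht => ?_⟩
  refine (eq_add_integral_of_hasDerivAt (fun r hr => (hf r hr).1.fst)
    (continuous_fst.comp_continuousOn (continuousOn_augField_comp hθ hΦ hf)) ht).trans ?_
  refine congrArg₂ _ (by simp only [hf0]) (integral_congr fun s hs => ?_)
  rw [fvec_eq_augField_augCurve,
    augCurve_fst_eq hθ hΦ hf0 hf (uIcc_subset_Icc (left_mem_Icc.2 (ht.1.trans ht.2)) ht hs)]

end Existence

theorem exists_isIntegralSolution (hθ : 0 < θ) (hΦ : ContDiff ℝ 2 Φ) (hc : 0 < c)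
    (hx0 : gradient Φ x0 ≠ 0) : ∃ T > 0, ∃ x, IsIntegralSolution d p θ c Φ v0 x0 T x := by
  have hgrad : Continuous (gradient Φ) := (hΦ.gradient (m := 0) (by norm_num)).continuous
  have hU : IsOpen {z : EuclideanSpace ℝ (Fin d) × ℝ × EuclideanSpace ℝ (Fin d) |
      gradient Φ z.1 ≠ 0 ∧ 0 < z.2.1 + c} :=
    (isOpen_ne_fun (hgrad.comp continuous_fst) continuous_const).inter
      (isOpen_lt continuous_const (continuous_snd.fst.add continuous_const))
  have hG : ContDiffAt ℝ 1 (augField d p θ c Φ v0) (x0, 0, 0) :=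
    contDiffAt_augField hθ hΦ hx0 (by simpa using hc.ne')
  obtain ⟨T, hT, f, hf0, hf⟩ :=
    hG.exists_forall_mem_Icc_hasDerivAt_mem (hU.mem_nhds ⟨hx0, by simpa using hc⟩)
  exact ⟨T, hT, _, isIntegralSolution_fst hθ hΦ hf0 hf⟩

end IntegralEquation

theorem stmt_3_general (d p : ℕ) (θ c : ℝ)
    (hθ : θ ∈ Set.Ioo (0:ℝ) 1) (hc : 0 < c)
    (Φ : EuclideanSpace ℝ (Fin d) → ℝ)
    (hsmooth : ContDiff ℝ 2 Φ)
    (x0 v0 : EuclideanSpace ℝ (Fin d)) (hx0 : gradient Φ x0 ≠ 0) :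
    ∃ t0 > (0:ℝ), ∃ x : ℝ → EuclideanSpace ℝ (Fin d),
      -- the solution: continuous, stays in Ω, satisfies the integral equation
      (ContinuousOn x (Set.Icc 0 t0) ∧
        (∀ s ∈ Set.Icc (0:ℝ) t0, gradient Φ (x s) ≠ 0) ∧
        (∀ t ∈ Set.Icc (0:ℝ) t0, x t = x0 + ∫ s in (0:ℝ)..t, Fvec d p θ c Φ v0 x s)) ∧
      -- in particular: x(0) = x0 and x is continuously differentiable with x' = F
      x 0 = x0 ∧
      (∀ t ∈ Set.Icc (0:ℝ) t0,
        HasDerivWithinAt x (Fvec d p θ c Φ v0 x t) (Set.Icc 0 t0) t) ∧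
      ContinuousOn (fun t => Fvec d p θ c Φ v0 x t) (Set.Icc 0 t0) ∧
      -- uniqueness among continuous Ω-valued solutions of the integral equation
      ∀ y : ℝ → EuclideanSpace ℝ (Fin d),
        (ContinuousOn y (Set.Icc 0 t0) ∧
          (∀ s ∈ Set.Icc (0:ℝ) t0, gradient Φ (y s) ≠ 0) ∧
          (∀ t ∈ Set.Icc (0:ℝ) t0, y t = x0 + ∫ s in (0:ℝ)..t, Fvec d p θ c Φ v0 y s)) →
        Set.EqOn y x (Set.Icc 0 t0) := by
  obtain ⟨T, hT, x, hx⟩ := exists_isIntegralSolution (p := p) (v0 := v0) hθ.1 hsmooth hc hx0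
  exact ⟨T, hT, x, hx, hx.apply_zero hT.le, fun t => hx.hasDerivWithinAt hθ.1 hsmooth hc,
    hx.continuousOn_fvec hθ.1 hsmooth hc,
    fun y hy => IsIntegralSolution.eqOn hy hθ.1 hsmooth hc hT.le hx⟩

/-- existence and uniqueness of a local solution of the integral equation
`x(t) = x0 + ∫₀ᵗ F(s) ds`; in particular the solution is `C¹` with `x' = F` and
`x(0) = x0`. -/
theorem stmt_3 (d p : ℕ) (hd : 1 ≤ d) (hp : 1 ≤ p) (θ c : ℝ)
    (hθ : θ ∈ Set.Ioo (0:ℝ) 1) (hc : 0 < c)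
    (Φ : EuclideanSpace ℝ (Fin d) → ℝ)
    (hconv : ConvexOn ℝ Set.univ Φ) (hsmooth : ContDiff ℝ 2 Φ)
    (hmin : ∃ z, ∀ y, Φ z ≤ Φ y)
    (x0 v0 : EuclideanSpace ℝ (Fin d)) (hx0 : gradient Φ x0 ≠ 0) :
    ∃ t0 > (0:ℝ), ∃ x : ℝ → EuclideanSpace ℝ (Fin d),
      -- the solution: continuous, stays in Ω, satisfies the integral equation
      (ContinuousOn x (Set.Icc 0 t0) ∧
        (∀ s ∈ Set.Icc (0:ℝ) t0, gradient Φ (x s) ≠ 0) ∧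
        (∀ t ∈ Set.Icc (0:ℝ) t0, x t = x0 + ∫ s in (0:ℝ)..t, Fvec d p θ c Φ v0 x s)) ∧
      -- in particular: x(0) = x0 and x is continuously differentiable with x' = F
      x 0 = x0 ∧
      (∀ t ∈ Set.Icc (0:ℝ) t0,
        HasDerivWithinAt x (Fvec d p θ c Φ v0 x t) (Set.Icc 0 t0) t) ∧
      ContinuousOn (fun t => Fvec d p θ c Φ v0 x t) (Set.Icc 0 t0) ∧
      -- uniqueness among continuous Ω-valued solutions of the integral equation
      ∀ y : ℝ → EuclideanSpace ℝ (Fin d),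
        (ContinuousOn y (Set.Icc 0 t0) ∧
          (∀ s ∈ Set.Icc (0:ℝ) t0, gradient Φ (y s) ≠ 0) ∧
          (∀ t ∈ Set.Icc (0:ℝ) t0, y t = x0 + ∫ s in (0:ℝ)..t, Fvec d p θ c Φ v0 y s)) →
        Set.EqOn y x (Set.Icc 0 t0) :=
  stmt_3_general d p θ c hθ hc Φ hsmooth x0 v0 hx0
end

section
/- Let t0 > 0 and suppose (x, v, λ) with a(t) = (1/4)(∫₀ᵗ √(λ(s)) ds + c)² is a solution of the first-order system (FO) on [0, t0]. Then for every t ∈ [0, t0]: ‖v(t) − x*‖ ≤ √(2E(0)) and ‖x(t) − x*‖ ≤ ‖x0 − x*‖ + 3√(E(0)); in particular (x(·), v(·)) is bounded on [0, t0] by a bound depending only on the initial condition. -/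
/-!
Along (FO) the energy `E` is nonincreasing: substituting both equations,
`E' = a' (Φ(x) - Φ(x*) - ⟪∇Φ(x), x - x*⟫) - a'² ‖∇Φ(x)‖²`, which is `≤ 0` by convexity because
`a' ≥ 0`. Hence `½ ‖v - x*‖² ≤ E(t) ≤ E(0)`. For `x`, the equation
`x' = -(a'/a) (x - v) - (a'²/a) ∇Φ(x)` shows that `‖x - x*‖²` cannot increase while
`‖x - x*‖ ≥ ‖v - x*‖`, since then both `⟪x - v, x - x*⟫` and `⟪∇Φ(x), x - x*⟫` are nonnegative;
so `‖x - x*‖` never exceeds `max ‖x₀ - x*‖ √(2E(0))`.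
-/

open Set

open scoped RealInnerProductSpace

section Hilbert

variable {F : Type*} [NormedAddCommGroup F] [InnerProductSpace ℝ F]

theorem HasGradientAt.comp_hasDerivAt [CompleteSpace F] {f : F → ℝ} {g : F} {x : ℝ → F}
    {x' : F} {t : ℝ} (hf : HasGradientAt f g (x t)) (hx : HasDerivAt x x' t) :
    HasDerivAt (fun s => f (x s)) ⟪g, x'⟫ t := by
  have h := hf.hasFDerivAt.comp_hasDerivAt t hx
  rwa [InnerProductSpace.toDual_apply_apply] at h

theorem ConvexOn.sub_le_inner_of_hasGradientAt [CompleteSpace F] {s : Set F} {f : F → ℝ}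
    {g y z : F} (hf : ConvexOn ℝ s f) (hy : y ∈ s) (hz : z ∈ s) (hg : HasGradientAt f g y) :
    f y - f z ≤ ⟪g, y - z⟫ := by
  set L : ℝ →ᵃ[ℝ] F := AffineMap.lineMap y z
  have hL : ∀ r : ℝ, L r = y + r • (z - y) := fun r => by
    simp [L, AffineMap.lineMap_apply, add_comm]
  have hline : HasDerivAt (fun r : ℝ => L r) (z - y) 0 := by
    simpa [hL] using ((hasDerivAt_id (0:ℝ)).smul_const (z - y)).const_add y
  rw [show y = L 0 by simp [hL]] at hg
  have hslope := (hf.comp_affineMap L).le_slope_of_hasDerivAt (x := 0) (y := 1)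
    (by simpa [hL] using hy) (by simpa [hL] using hz) one_pos (hg.comp_hasDerivAt hline)
  have : ⟪g, y - z⟫ = -⟪g, z - y⟫ := by rw [← inner_neg_right, neg_sub]
  simp [slope_def_field, hL] at hslope
  linarith

theorem inner_sub_nonneg_of_norm_sub_le {x v w : F} (h : ‖v - w‖ ≤ ‖x - w‖) :
    0 ≤ ⟪x - v, x - w⟫ := by
  have hx : x - v = (x - w) - (v - w) := by abel
  rw [hx, inner_sub_left, real_inner_self_eq_norm_sq]
  nlinarith [real_inner_le_norm (v - w) (x - w), norm_nonneg (x - w)]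

theorem inner_first_order_dissipation {a a' : ℝ} {x v x' v' g w : F} (ha : a ≠ 0)
    (hv : v' + a' • g = 0) (hx : x' + (a' / a) • (x - v) + (a' ^ 2 / a) • g = 0) :
    a * ⟪g, x'⟫ + ⟪v', v - w⟫ = -(a' * ⟪g, x - w⟫) - a' ^ 2 * ‖g‖ ^ 2 := by
  rw [add_assoc] at hx
  rw [eq_neg_of_add_eq_zero_left hx, eq_neg_of_add_eq_zero_left hv]
  have hxw : x - v = (x - w) - (v - w) := by abel
  simp only [inner_neg_right, inner_neg_left, inner_add_right, real_inner_smul_right,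
    real_inner_smul_left, hxw, inner_sub_right, real_inner_self_eq_norm_sq]
  field_simp
  ring

theorem inner_first_order_nonpos {a a' : ℝ} {x v x' g w : F} (ha : 0 < a) (ha' : 0 ≤ a')
    (hx : x' + (a' / a) • (x - v) + (a' ^ 2 / a) • g = 0)
    (hxv : 0 ≤ ⟪x - v, x - w⟫) (hg : 0 ≤ ⟪g, x - w⟫) :
    ⟪x - w, x'⟫ ≤ 0 := by
  rw [add_assoc] at hx
  rw [eq_neg_of_add_eq_zero_left hx, inner_neg_right, inner_add_right, real_inner_smul_right,
    real_inner_smul_right, real_inner_comm (x - v), real_inner_comm g, neg_nonpos]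
  positivity

end Hilbert

theorem image_le_of_deriv_right_nonpos_of_lt {f f' : ℝ → ℝ} {a b K : ℝ}
    (hf : ContinuousOn f (Icc a b)) (hf' : ∀ t ∈ Ico a b, HasDerivWithinAt f (f' t) (Ici t) t)
    (ha : f a ≤ K) (hK : ∀ t ∈ Ioo a b, K < f t → f' t ≤ 0) :
    ∀ t ∈ Icc a b, f t ≤ K := by
  intro t ht
  refine le_of_forall_pos_le_add fun ε hε => ?_
  -- the fence `K + ε e^{s - t}` is strictly increasing and equals `K + ε` at `t`
  have hB : ∀ s, HasDerivAt (fun s => K + ε * Real.exp (s - t)) (ε * Real.exp (s - t)) s :=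
    fun s => by simpa using (((hasDerivAt_id s).sub_const t).exp.const_mul ε).const_add K
  have hfence := image_le_of_deriv_right_lt_deriv_boundary hf hf'
    (by nlinarith [Real.exp_pos (a - t)]) hB (fun s hs hfs => ?_) ht
  · simpa using hfence
  have hKs : K < f s := by rw [hfs]; nlinarith [Real.exp_pos (s - t)]
  have has : a < s := lt_of_le_of_ne hs.1 (by rintro rfl; linarith)
  nlinarith [hK s ⟨has, hs.2⟩ hKs, Real.exp_pos (s - t)]

noncomputable def timeScale (g : ℝ → ℝ) (c t : ℝ) : ℝ :=
  (1 / 4) * ((∫ s in (0:ℝ)..t, g s) + c) ^ 2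

section TimeScale

variable {g : ℝ → ℝ} {c T t : ℝ}

theorem timeScale_pos (hc : 0 < c) (ht : 0 ≤ t) (hg : ∀ s ∈ Icc 0 t, 0 ≤ g s) :
    0 < timeScale g c t := by
  have := intervalIntegral.integral_nonneg (μ := MeasureTheory.volume) ht hg
  unfold timeScale
  positivity

theorem continuousOn_timeScale (hg : ContinuousOn g (Icc 0 T)) :
    ContinuousOn (timeScale g c) (Icc 0 T) := by
  rcases lt_or_ge T 0 with hT | hT
  · simp [Icc_eq_empty_of_lt hT]
  rw [← uIcc_of_le hT] at hg ⊢
  have hI := intervalIntegral.continuousOn_primitive_interval'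
    (hg.intervalIntegrable (μ := MeasureTheory.volume)) left_mem_uIcc
  exact continuousOn_const.mul ((hI.add continuousOn_const).pow 2)

theorem hasDerivAt_timeScale (hg : ContinuousOn g (Icc 0 T)) (ht : t ∈ Ioo 0 T) :
    HasDerivAt (timeScale g c) ((1 / 2) * ((∫ s in (0:ℝ)..t, g s) + c) * g t) t := by
  have hgt : ContinuousOn g (uIcc 0 t) := hg.mono <| by
    rw [uIcc_of_le ht.1.le]; exact Icc_subset_Icc_right ht.2.le
  have hI : HasDerivAt (fun r => ∫ s in (0:ℝ)..r, g s) (g t) t :=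
    intervalIntegral.integral_hasDerivAt_right hgt.intervalIntegrable
      ((hg.mono Ioo_subset_Icc_self).stronglyMeasurableAtFilter isOpen_Ioo t ht)
      (hg.continuousAt (Icc_mem_nhds ht.1 ht.2))
  unfold timeScale
  refine (((hI.add_const c).pow 2).const_mul (1 / 4 : ℝ)).congr_deriv ?_
  ring

theorem deriv_timeScale_nonneg (hc : 0 < c) (hg : ContinuousOn g (Icc 0 T))
    (hg_nonneg : ∀ s ∈ Icc 0 T, 0 ≤ g s) (ht : t ∈ Ioo 0 T) : 0 ≤ deriv (timeScale g c) t := by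
  rw [(hasDerivAt_timeScale hg ht).deriv]
  have := intervalIntegral.integral_nonneg (μ := MeasureTheory.volume) ht.1.le
    fun s hs => hg_nonneg s (Icc_subset_Icc_right ht.2.le hs)
  have := hg_nonneg t (Ioo_subset_Icc_self ht)
  positivity

end TimeScale

section FirstOrderSystem

variable {F : Type*} [NormedAddCommGroup F] {Φ : F → ℝ} {a : ℝ → ℝ} {x v : ℝ → F} {w : F}
  {T : ℝ}

noncomputable def energy (Φ : F → ℝ) (a : ℝ → ℝ) (x v : ℝ → F) (w : F) (t : ℝ) : ℝ :=
  a t * (Φ (x t) - Φ w) + (1 / 2) * ‖v t - w‖ ^ 2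

variable [InnerProductSpace ℝ F]

theorem hasDerivAt_energy [CompleteSpace F] {a' : ℝ} {x' v' g : F} {t : ℝ}
    (ha : HasDerivAt a a' t) (hx : HasDerivAt x x' t) (hv : HasDerivAt v v' t)
    (hΦ : HasGradientAt Φ g (x t)) :
    HasDerivAt (energy Φ a x v w) (a' * (Φ (x t) - Φ w) + a t * ⟪g, x'⟫ + ⟪v', v t - w⟫) t := by
  refine ((ha.mul ((hΦ.comp_hasDerivAt hx).sub_const _)).add
    (((hv.sub_const w).norm_sq).const_mul (1 / 2))).congr_deriv ?_
  rw [real_inner_comm (v t - w) v']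
  ring

theorem antitoneOn_energy [CompleteSpace F] (hconv : ConvexOn ℝ univ Φ)
    (hΦ : Differentiable ℝ Φ) (ha : ContinuousOn a (Icc 0 T))
    (ha_pos : ∀ t ∈ Ioo 0 T, 0 < a t) (ha_diff : ∀ t ∈ Ioo 0 T, DifferentiableAt ℝ a t)
    (ha_mono : ∀ t ∈ Ioo 0 T, 0 ≤ deriv a t)
    (hx : ∀ t ∈ Icc 0 T, DifferentiableAt ℝ x t) (hv : ∀ t ∈ Icc 0 T, DifferentiableAt ℝ v t)
    (heqv : ∀ t ∈ Ioo 0 T, deriv v t + deriv a t • gradient Φ (x t) = 0)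
    (heqx : ∀ t ∈ Ioo 0 T, deriv x t + (deriv a t / a t) • (x t - v t)
        + ((deriv a t) ^ 2 / a t) • gradient Φ (x t) = 0) :
    AntitoneOn (energy Φ a x v w) (Icc 0 T) := by
  have hxc : ContinuousOn x (Icc 0 T) := fun t ht => (hx t ht).continuousAt.continuousWithinAt
  have hvc : ContinuousOn v (Icc 0 T) := fun t ht => (hv t ht).continuousAt.continuousWithinAt
  have hcont : ContinuousOn (energy Φ a x v w) (Icc 0 T) :=
    (ha.mul ((hΦ.continuous.comp_continuousOn hxc).sub continuousOn_const)).add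
      (continuousOn_const.mul ((hvc.sub continuousOn_const).norm.pow 2))
  have hderiv : ∀ t ∈ Ioo 0 T, HasDerivAt (energy Φ a x v w)
      (deriv a t * (Φ (x t) - Φ w) + a t * ⟪gradient Φ (x t), deriv x t⟫
        + ⟪deriv v t, v t - w⟫) t := fun t ht =>
    hasDerivAt_energy (ha_diff t ht).hasDerivAt (hx t (Ioo_subset_Icc_self ht)).hasDerivAt
      (hv t (Ioo_subset_Icc_self ht)).hasDerivAt (hΦ _).hasGradientAt
  refine antitoneOn_of_deriv_nonpos (convex_Icc 0 T) hcont ?_ ?_ <;> rw [interior_Icc]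
  · exact fun t ht => (hderiv t ht).differentiableAt.differentiableWithinAt
  intro t ht
  rw [(hderiv t ht).deriv, add_assoc,
    inner_first_order_dissipation (ha_pos t ht).ne' (heqv t ht) (heqx t ht)]
  have htangent := hconv.sub_le_inner_of_hasGradientAt (mem_univ (x t)) (mem_univ w)
    (hΦ (x t)).hasGradientAt
  nlinarith [mul_le_mul_of_nonneg_left htangent (ha_mono t ht),
    sq_nonneg (deriv a t * ‖gradient Φ (x t)‖)]

theorem norm_sub_le_max_of_first_order [CompleteSpace F] (hconv : ConvexOn ℝ univ Φ)
    (hΦ : Differentiable ℝ Φ) (hmin : ∀ y, Φ w ≤ Φ y)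
    (ha_pos : ∀ t ∈ Ioo 0 T, 0 < a t) (ha_mono : ∀ t ∈ Ioo 0 T, 0 ≤ deriv a t)
    (hx : ∀ t ∈ Icc 0 T, DifferentiableAt ℝ x t)
    (heqx : ∀ t ∈ Ioo 0 T, deriv x t + (deriv a t / a t) • (x t - v t)
        + ((deriv a t) ^ 2 / a t) • gradient Φ (x t) = 0)
    {M : ℝ} (hvM : ∀ t ∈ Ioo 0 T, ‖v t - w‖ ≤ M) :
    ∀ t ∈ Icc 0 T, ‖x t - w‖ ≤ max ‖x 0 - w‖ M := by
  intro t ht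
  have hK : 0 ≤ max ‖x 0 - w‖ M := (norm_nonneg _).trans (le_max_left _ _)
  refine (pow_le_pow_iff_left₀ (norm_nonneg _) hK two_ne_zero).1 ?_
  have hxc : ContinuousOn x (Icc 0 T) := fun t ht => (hx t ht).continuousAt.continuousWithinAt
  refine image_le_of_deriv_right_nonpos_of_lt (f := fun s => ‖x s - w‖ ^ 2)
    (f' := fun s => 2 * ⟪x s - w, deriv x s⟫) ((hxc.sub continuousOn_const).norm.pow 2)
    (fun s hs => ((hx s (Ico_subset_Icc_self hs)).hasDerivAt.sub_const w).norm_sq.hasDerivWithinAt)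
    (pow_le_pow_left₀ (norm_nonneg _) (le_max_left _ _) 2) (fun s hs hlt => ?_) t ht
  have hvx : ‖v s - w‖ ≤ ‖x s - w‖ :=
    (hvM s hs).trans ((le_max_right _ _).trans (lt_of_pow_lt_pow_left₀ 2 (norm_nonneg _) hlt).le)
  have hgrad : 0 ≤ ⟪gradient Φ (x s), x s - w⟫ :=
    (sub_nonneg.2 (hmin (x s))).trans
      (hconv.sub_le_inner_of_hasGradientAt (mem_univ _) (mem_univ w) (hΦ (x s)).hasGradientAt)
  have := inner_first_order_nonpos (ha_pos s hs) (ha_mono s hs) (heqx s hs)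
    (inner_sub_nonneg_of_norm_sub_le hvx) hgrad
  linarith

end FirstOrderSystem

theorem stmt_5_general (d : ℕ)
    (Φ : EuclideanSpace ℝ (Fin d) → ℝ)
    (hconv : ConvexOn ℝ Set.univ Φ) (hsmooth : ContDiff ℝ 2 Φ)
    (c t0 : ℝ) (hc : 0 < c)
    (x0 xstar : EuclideanSpace ℝ (Fin d))
    (hstar : ∀ y, Φ xstar ≤ Φ y)
    (x v : ℝ → EuclideanSpace ℝ (Fin d)) (lam : ℝ → ℝ) (a : ℝ → ℝ)
    (hlamcont : ContinuousOn lam (Set.Icc 0 t0))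
    (ha : ∀ t, a t = (1/4) * ((∫ s in (0:ℝ)..t, Real.sqrt (lam s)) + c) ^ 2)
    (hxdiff : ∀ t ∈ Set.Icc (0:ℝ) t0, DifferentiableAt ℝ x t)
    (hvdiff : ∀ t ∈ Set.Icc (0:ℝ) t0, DifferentiableAt ℝ v t)
    (heqv : ∀ t ∈ Set.Icc (0:ℝ) t0, deriv v t + deriv a t • gradient Φ (x t) = 0)
    (heqx : ∀ t ∈ Set.Icc (0:ℝ) t0,
      deriv x t + (deriv a t / a t) • (x t - v t)
        + ((deriv a t) ^ 2 / a t) • gradient Φ (x t) = 0)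
    (hx0' : x 0 = x0)
    (E : ℝ → ℝ)
    (hE : ∀ t, E t = a t * (Φ (x t) - Φ xstar) + (1/2) * ‖v t - xstar‖ ^ 2) :
    ∀ t ∈ Set.Icc (0:ℝ) t0,
      ‖v t - xstar‖ ≤ Real.sqrt (2 * E 0) ∧
      ‖x t - xstar‖ ≤ ‖x0 - xstar‖ + 3 * Real.sqrt (E 0) := by
  have ha_eq : a = timeScale (fun s => √(lam s)) c := funext ha
  have hg : ContinuousOn (fun s => √(lam s)) (Icc 0 t0) := hlamcont.sqrt
  have ha_pos : ∀ t ∈ Icc 0 t0, 0 < a t := fun t ht =>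
    ha_eq ▸ timeScale_pos hc ht.1 fun s _ => Real.sqrt_nonneg _
  have ha_mono : ∀ t ∈ Ioo 0 t0, 0 ≤ deriv a t := fun t ht =>
    ha_eq ▸ deriv_timeScale_nonneg hc hg (fun s _ => Real.sqrt_nonneg _) ht
  have ha_diff : ∀ t ∈ Ioo 0 t0, DifferentiableAt ℝ a t := fun t ht =>
    ha_eq ▸ (hasDerivAt_timeScale hg ht).differentiableAt
  have hΦ : Differentiable ℝ Φ := hsmooth.differentiable (by norm_num)
  have hE_anti : AntitoneOn E (Icc 0 t0) := funext hE ▸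
    antitoneOn_energy hconv hΦ (ha_eq ▸ continuousOn_timeScale hg)
      (fun t ht => ha_pos t (Ioo_subset_Icc_self ht)) ha_diff ha_mono hxdiff hvdiff
      (fun t ht => heqv t (Ioo_subset_Icc_self ht)) (fun t ht => heqx t (Ioo_subset_Icc_self ht))
  intro t ht
  have h0 : (0:ℝ) ∈ Icc 0 t0 := ⟨le_rfl, ht.1.trans ht.2⟩
  have hv_sq : ∀ s ∈ Icc 0 t0, ‖v s - xstar‖ ^ 2 ≤ 2 * E 0 := fun s hs => by
    nlinarith [hE s, hE_anti h0 hs hs.1, mul_nonneg (ha_pos s hs).le (sub_nonneg.2 (hstar (x s)))]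
  have hv : ∀ s ∈ Icc 0 t0, ‖v s - xstar‖ ≤ √(2 * E 0) :=
    fun s hs => Real.le_sqrt_of_sq_le (hv_sq s hs)
  have hsqrt : √(2 * E 0) ≤ 3 * √(E 0) := by
    rw [Real.sqrt_le_left (by positivity), mul_pow,
      Real.sq_sqrt (by linarith [hv_sq 0 h0, sq_nonneg ‖v 0 - xstar‖])]
    linarith [hv_sq 0 h0, sq_nonneg ‖v 0 - xstar‖]
  refine ⟨hv t ht, ?_⟩
  calc ‖x t - xstar‖ ≤ max ‖x 0 - xstar‖ √(2 * E 0) :=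
        norm_sub_le_max_of_first_order hconv hΦ hstar
          (fun s hs => ha_pos s (Ioo_subset_Icc_self hs)) ha_mono hxdiff
          (fun s hs => heqx s (Ioo_subset_Icc_self hs)) (fun s hs => hv s (Ioo_subset_Icc_self hs))
          t ht
    _ ≤ ‖x0 - xstar‖ + 3 * √(E 0) :=
      hx0' ▸ max_le (le_add_of_nonneg_right (by positivity))
        (le_add_of_nonneg_of_le (norm_nonneg _) hsqrt)

/-- along a solution of the first-order system (FO) on `[0, t0]`, the
trajectory is bounded: `‖v(t) − x*‖ ≤ √(2E(0))` and
`‖x(t) − x*‖ ≤ ‖x0 − x*‖ + 3√(E(0))` for all `t ∈ [0, t0]`. -/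
theorem stmt_5 (d p : ℕ) (hd : 1 ≤ d) (hp : 1 ≤ p)
    (Φ : EuclideanSpace ℝ (Fin d) → ℝ)
    (hconv : ConvexOn ℝ Set.univ Φ) (hsmooth : ContDiff ℝ 2 Φ)
    (θ c t0 : ℝ) (hθ : θ ∈ Set.Ioo (0:ℝ) 1) (hc : 0 < c) (ht0 : 0 < t0)
    (x0 v0 xstar : EuclideanSpace ℝ (Fin d)) (hx0 : gradient Φ x0 ≠ 0)
    (hstar : ∀ y, Φ xstar ≤ Φ y)
    (x v : ℝ → EuclideanSpace ℝ (Fin d)) (lam : ℝ → ℝ) (a : ℝ → ℝ)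
    (hlamcont : ContinuousOn lam (Set.Icc 0 t0))
    (hlampos : ∀ t ∈ Set.Icc (0:ℝ) t0, 0 < lam t)
    (ha : ∀ t, a t = (1/4) * ((∫ s in (0:ℝ)..t, Real.sqrt (lam s)) + c) ^ 2)
    (hxdiff : ∀ t ∈ Set.Icc (0:ℝ) t0, DifferentiableAt ℝ x t)
    (hvdiff : ∀ t ∈ Set.Icc (0:ℝ) t0, DifferentiableAt ℝ v t)
    (heqv : ∀ t ∈ Set.Icc (0:ℝ) t0, deriv v t + deriv a t • gradient Φ (x t) = 0)
    (heqx : ∀ t ∈ Set.Icc (0:ℝ) t0,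
      deriv x t + (deriv a t / a t) • (x t - v t)
        + ((deriv a t) ^ 2 / a t) • gradient Φ (x t) = 0)
    (halg : ∀ t ∈ Set.Icc (0:ℝ) t0, (lam t) ^ p * ‖gradient Φ (x t)‖ ^ (p - 1) = θ)
    (hx0' : x 0 = x0) (hv0' : v 0 = v0)
    (E : ℝ → ℝ)
    (hE : ∀ t, E t = a t * (Φ (x t) - Φ xstar) + (1/2) * ‖v t - xstar‖ ^ 2) :
    ∀ t ∈ Set.Icc (0:ℝ) t0,
      ‖v t - xstar‖ ≤ Real.sqrt (2 * E 0) ∧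
      ‖x t - xstar‖ ≤ ‖x0 - xstar‖ + 3 * Real.sqrt (E 0) :=
  stmt_5_general d Φ hconv hsmooth c t0 hc x0 xstar hstar x v lam a hlamcont ha hxdiff hvdiff heqv
    heqx hx0' E hE
end

section
/- Suppose (x, v, λ) with a(t) = (1/4)(∫₀ᵗ √(λ(s)) ds + c)² is a global solution of the first-order system (FO) on [0, ∞). Then E(0) > 0 and for every t ≥ 0: a(t) ≥ (c/2 + (θ^{2/(3p+1)} / ((p+1)·E(0)^{(p−1)/(3p+1)}))^{(3p+1)/4} · t^{(3p+1)/4})². -/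
/-!
Write `b = √a = (∫₀ᵗ √λ + c) / 2`. Along (FO) the Lyapunov function decays at the rate
`E' ≤ -W` with `W = (a' ‖∇Φ(x)‖)² = (b √λ ‖∇Φ(x)‖)²`, so that `∫₀ᵀ W ≤ E(0)`. On the other
hand the algebraic equation `λ^p ‖∇Φ(x)‖^{p-1} = θ` makes `(b^q)' W^γ = C` constant, where
`q = 2/(p+1)`, `γ = (p-1)/(2(p+1))` and `C = θ^{1/(p+1)}/(p+1)`. Bounding `W^{-γ}` from below
by its tangent line at `E(0)/T` (a reverse Hölder inequality) turns the energy bound into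
`b(T)^q ≥ b(0)^q + C E(0)^{-γ} T^{1+γ}`, and superadditivity of `x ↦ x^{(p+1)/2}` gives the
lower bound for `b(T)`, hence for `a(T)`.
-/

open Set Real

theorem ConvexOn.add_apply_sub_le_of_hasFDerivAt {E : Type*} [NormedAddCommGroup E]
    [NormedSpace ℝ E] {f : E → ℝ} {f' : E →L[ℝ] ℝ} {y : E} (hf : ConvexOn ℝ univ f)
    (hf' : HasFDerivAt f f' y) (z : E) : f y + f' (z - y) ≤ f z := by
  have hline : HasDerivAt (f ∘ AffineMap.lineMap (k := ℝ) y z) (f' (z - y)) 0 :=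
    HasFDerivAt.comp_hasDerivAt _ (by simpa using hf') AffineMap.hasDerivAt_lineMap
  have := (hf.comp_affineMap (AffineMap.lineMap y z)).le_slope_of_hasDerivAt
    (mem_univ 0) (mem_univ 1) one_pos hline
  simp only [slope_def_field, Function.comp_apply, AffineMap.lineMap_apply_zero,
    AffineMap.lineMap_apply_one, sub_zero, div_one] at this
  linarith

theorem lt_of_gradient_ne_zero {H : Type*} [NormedAddCommGroup H] [InnerProductSpace ℝ H]
    [CompleteSpace H] {Φ : H → ℝ} {xstar y : H} (hstar : ∀ z, Φ xstar ≤ Φ z)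
    (hy : gradient Φ y ≠ 0) : Φ xstar < Φ y := by
  refine lt_of_not_ge fun hle => hy ?_
  have hmin : IsLocalMin Φ y := Filter.Eventually.of_forall fun z => hle.trans (hstar z)
  simp [gradient, hmin.fderiv_eq_zero]

theorem hasDerivWithinAt_integral_Ici {f : ℝ → ℝ} {t₀ t : ℝ} (hf : ContinuousOn f (Ici t₀))
    (ht : t ∈ Ici t₀) : HasDerivWithinAt (fun u => ∫ s in t₀..u, f s) (f t) (Ici t₀) t := by
  have hint : IntervalIntegrable f MeasureTheory.volume t₀ t :=
    (hf.mono (by simp [uIcc_of_le (mem_Ici.mp ht), Icc_subset_Ici_self])).intervalIntegrable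
  have hf' := hf.mono Ioi_subset_Ici_self
  rcases (mem_Ici.mp ht).eq_or_lt with rfl | ht
  · exact intervalIntegral.integral_hasDerivWithinAt_right (t := Ioi t₀) hint
      (hf'.stronglyMeasurableAtFilter_nhdsWithin measurableSet_Ioi _)
      ((hf t₀ self_mem_Ici).mono Ioi_subset_Ici_self)
  · exact (intervalIntegral.integral_hasDerivAt_right hint
      (hf'.stronglyMeasurableAtFilter isOpen_Ioi _ ht)
      (hf.continuousAt (Ici_mem_nhds ht))).hasDerivWithinAt

theorem exists_sq_eq_of_eq_integral_sqrt {lam a : ℝ → ℝ} {c : ℝ} (hc : 0 < c)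
    (hlam : ContinuousOn lam (Ici 0))
    (ha : ∀ t, a t = 1 / 4 * ((∫ s in (0:ℝ)..t, √(lam s)) + c) ^ 2) :
    ∃ b : ℝ → ℝ, (∀ t, a t = b t ^ 2) ∧ b 0 = c / 2 ∧ (∀ t ∈ Ici (0:ℝ), 0 < b t) ∧
      ContinuousOn b (Ici 0) ∧ ∀ t > 0, HasDerivAt b (√(lam t) / 2) t := by
  have hb : ∀ t ∈ Ici (0:ℝ), HasDerivWithinAt (fun t => ((∫ s in (0:ℝ)..t, √(lam s)) + c) / 2)
      (√(lam t) / 2) (Ici 0) t := fun t ht =>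
    ((hasDerivWithinAt_integral_Ici hlam.sqrt ht).add_const c).div_const 2
  refine ⟨_, fun t => by rw [ha]; ring, by simp, fun t ht => ?_,
    fun t ht => (hb t ht).continuousWithinAt, fun t ht => (hb t ht.le).hasDerivAt (Ici_mem_nhds ht)⟩
  have : 0 ≤ ∫ s in (0:ℝ)..t, √(lam s) :=
    intervalIntegral.integral_nonneg ht fun s _ => sqrt_nonneg (lam s)
  positivity

section Lyapunov

variable {H : Type*} [NormedAddCommGroup H]

noncomputable def lyapunovEnergy (Φ : H → ℝ) (xstar : H) (a : ℝ → ℝ) (x v : ℝ → H) (t : ℝ) :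
    ℝ :=
  a t * (Φ (x t) - Φ xstar) + (1 / 2) * ‖v t - xstar‖ ^ 2

variable {Φ : H → ℝ} {xstar : H} {a : ℝ → ℝ} {x v : ℝ → H}

theorem lyapunovEnergy_nonneg (hstar : ∀ y, Φ xstar ≤ Φ y) {t : ℝ} (ha : 0 ≤ a t) :
    0 ≤ lyapunovEnergy Φ xstar a x v t :=
  add_nonneg (mul_nonneg ha (sub_nonneg.mpr (hstar _))) (by positivity)

theorem lyapunovEnergy_pos {t : ℝ} (ha : 0 < a t) (hxt : Φ xstar < Φ (x t)) :
    0 < lyapunovEnergy Φ xstar a x v t :=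
  add_pos_of_pos_of_nonneg (mul_pos ha (sub_pos.mpr hxt)) (by positivity)

theorem ContinuousOn.lyapunovEnergy {s : Set ℝ} (hΦ : Continuous Φ) (ha : ContinuousOn a s)
    (hx : ContinuousOn x s) (hv : ContinuousOn v s) :
    ContinuousOn (lyapunovEnergy Φ xstar a x v) s := by
  unfold _root_.lyapunovEnergy
  fun_prop

variable [InnerProductSpace ℝ H] [CompleteSpace H]

theorem hasDerivAt_lyapunovEnergy_le (hconv : ConvexOn ℝ univ Φ) {t a' : ℝ}
    (hΦ : DifferentiableAt ℝ Φ (x t)) (ha : HasDerivAt a a' t)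
    (hx : DifferentiableAt ℝ x t) (hv : DifferentiableAt ℝ v t)
    (hat : 0 < a t) (ha' : 0 ≤ a')
    (heqv : deriv v t + deriv a t • gradient Φ (x t) = 0)
    (heqx : deriv x t + (deriv a t / a t) • (x t - v t)
        + ((deriv a t) ^ 2 / a t) • gradient Φ (x t) = 0) :
    ∃ e, HasDerivAt (lyapunovEnergy Φ xstar a x v) e t ∧
      e ≤ -(a' * ‖gradient Φ (x t)‖) ^ 2 := by
  rw [ha.deriv] at heqv heqx
  set g := gradient Φ (x t)
  have hΦx : HasDerivAt (fun s => Φ (x s)) (inner ℝ g (deriv x t)) t := by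
    have := hΦ.hasGradientAt.hasFDerivAt.comp_hasDerivAt t hx.hasDerivAt
    rwa [InnerProductSpace.toDual_apply_apply] at this
  refine ⟨_, ((ha.mul (hΦx.sub_const (Φ xstar))).add
    ((hv.hasDerivAt.sub_const xstar).norm_sq.const_mul (1 / 2))), ?_⟩
  have hconvex : Φ (x t) - Φ xstar ≤ inner ℝ g (x t - v t) + inner ℝ g (v t - xstar) := by
    have := hconv.add_apply_sub_le_of_hasFDerivAt hΦ.hasGradientAt.hasFDerivAt xstar
    rw [InnerProductSpace.toDual_apply_apply, ← neg_sub, inner_neg_right] at this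
    rw [← inner_add_right, sub_add_sub_cancel]
    linarith
  have hdv : deriv v t = -(a' • g) := eq_neg_of_add_eq_zero_left heqv
  have hdx : deriv x t = -((a' / a t) • (x t - v t) + (a' ^ 2 / a t) • g) :=
    eq_neg_of_add_eq_zero_left (by rw [← add_assoc]; exact heqx)
  rw [hdv, hdx]
  simp only [inner_neg_right, inner_add_right, inner_smul_right,
    real_inner_self_eq_norm_sq, real_inner_comm g]
  field_simp
  nlinarith [mul_le_mul_of_nonneg_left hconvex ha']

end Lyapunov

theorem one_add_sub_mul_mul_rpow_le_one {γ v : ℝ} (hγ : 0 ≤ γ) (hv : 0 ≤ v) :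
    (1 + γ - γ * v) * v ^ γ ≤ 1 := by
  rcases hv.eq_or_lt with rfl | hv
  · rcases hγ.eq_or_lt with rfl | hγ
    · simp
    · simp [zero_rpow hγ.ne']
  -- Bernoulli's inequality at `v⁻¹` with exponent `1 + γ`
  have h := one_add_mul_self_le_rpow_one_add (s := v⁻¹ - 1) (p := 1 + γ) (by simp; positivity)
    (by linarith)
  rw [add_sub_cancel, rpow_one_add' (by positivity) (by linarith), inv_rpow hv.le] at h
  rw [← sub_nonneg] at h ⊢
  have : 0 ≤ v * v ^ γ * (v⁻¹ * (v ^ γ)⁻¹ - (1 + (1 + γ) * (v⁻¹ - 1))) :=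
    mul_nonneg (by positivity) h
  convert this using 1
  field_simp
  ring

-- the tangent line at `u₀` of the convex function `w ↦ C w^{-γ}` lies below it
theorem tangent_rpow_neg_le_of_mul_rpow_eq {γ C u₀ w y : ℝ} (hγ : 0 ≤ γ) (hC : 0 < C)
    (hu₀ : 0 < u₀) (hw : 0 ≤ w) (hy : y * w ^ γ = C) :
    C * u₀ ^ (-γ) * (1 + γ - γ * (w / u₀)) ≤ y := by
  have hwγ : 0 < w ^ γ := by
    refine lt_of_le_of_ne (rpow_nonneg hw γ) fun h => hC.ne' ?_
    rw [← hy, ← h, mul_zero]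
  refine le_of_mul_le_mul_right ?_ hwγ
  calc C * u₀ ^ (-γ) * (1 + γ - γ * (w / u₀)) * w ^ γ
      = C * ((1 + γ - γ * (w / u₀)) * (w / u₀) ^ γ) := by
        rw [div_rpow hw hu₀.le, rpow_neg hu₀.le]; ring
    _ ≤ C * 1 := by
        gcongr
        exact one_add_sub_mul_mul_rpow_le_one hγ (div_nonneg hw hu₀.le)
    _ = y * w ^ γ := by rw [mul_one, hy]

theorem add_mul_rpow_le_of_hasDerivAt_mul_rpow_eq {f f' E W : ℝ → ℝ} {C γ T : ℝ}
    (hγ : 0 ≤ γ) (hC : 0 < C) (hf : ContinuousOn f (Ici 0))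
    (hf' : ∀ t > 0, HasDerivAt f (f' t) t) (hW : ∀ t > 0, 0 ≤ W t)
    (hfW : ∀ t > 0, f' t * W t ^ γ = C) (hE : ContinuousOn E (Ici 0))
    (hE' : ∀ t > 0, ∃ e, HasDerivAt E e t ∧ e ≤ -W t) (hE0 : 0 < E 0) (hT : 0 < T)
    (hET : 0 ≤ E T) : f 0 + C * E 0 ^ (-γ) * T ^ (1 + γ) ≤ f T := by
  choose! e he heW using hE'
  -- `E(0)/T` is the tangent point for which the resulting bound is best
  set u₀ := E 0 / T with hu₀
  have hu₀pos : 0 < u₀ := div_pos hE0 hT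
  set K := C * u₀ ^ (-γ) with hK
  have hmono : MonotoneOn (fun s => f s - K * ((1 + γ) * s + γ / u₀ * E s)) (Ici 0) := by
    refine monotoneOn_of_hasDerivWithinAt_nonneg (convex_Ici 0) (by fun_prop)
      (f' := fun s => f' s - K * ((1 + γ) + γ / u₀ * e s)) (fun s hs => ?_) (fun s hs => ?_)
    all_goals rw [interior_Ici] at hs
    · exact ((hf' s hs).sub ((((hasDerivAt_id s).const_mul (1 + γ)).add
        ((he s hs).const_mul (γ / u₀))).const_mul K)).hasDerivWithinAt.congr_deriv (by simp)
    · have := mul_le_mul_of_nonneg_left (heW s hs) (by positivity : 0 ≤ K * (γ / u₀))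
      calc (0:ℝ) ≤ f' s - K * (1 + γ - γ * (W s / u₀)) :=
            sub_nonneg.mpr (tangent_rpow_neg_le_of_mul_rpow_eq hγ hC hu₀pos (hW s hs) (hfW s hs))
        _ = f' s - K * (1 + γ) - K * (γ / u₀) * -W s := by ring
        _ ≤ f' s - K * ((1 + γ) + γ / u₀ * e s) := by linarith
  have h0T := hmono self_mem_Ici hT.le hT.le
  have hKT : K * T = C * E 0 ^ (-γ) * T ^ (1 + γ) := by
    rw [hK, hu₀, div_rpow hE0.le hT.le, rpow_add hT, rpow_one, rpow_neg hT.le]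
    field_simp
  have hu₀T : γ / u₀ * E 0 = γ * T := by rw [hu₀]; field_simp
  simp only [mul_zero, zero_add, hu₀T] at h0T
  have : 0 ≤ K * (γ / u₀ * E T) := by positivity
  nlinarith

theorem add_rpow_inv_le_of_rpow_add_le {x y D q : ℝ} (hx : 0 ≤ x) (hy : 0 ≤ y) (hD : 0 ≤ D)
    (hq : 0 < q) (hq1 : q ≤ 1) (h : x ^ q + D ≤ y ^ q) : x + D ^ q⁻¹ ≤ y := by
  have hr : 1 ≤ q⁻¹ := one_le_inv_iff₀.mpr ⟨hq, hq1⟩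
  calc x + D ^ q⁻¹ = (x ^ q) ^ q⁻¹ + D ^ q⁻¹ := by rw [rpow_rpow_inv hx hq.ne']
    _ ≤ (x ^ q + D) ^ q⁻¹ := add_rpow_le_rpow_add (by positivity) hD hr
    _ ≤ (y ^ q) ^ q⁻¹ := by gcongr
    _ = y := rpow_rpow_inv hy hq.ne'

theorem mul_mul_rpow_eq_pow_mul_pow_rpow {n : ℕ} (hn : 1 ≤ n) {s g : ℝ} (hs : 0 ≤ s)
    (hg : 0 ≤ g) :
    s * (s * g) ^ (((n : ℝ) - 1) / (n + 1)) =
      ((s ^ 2) ^ n * g ^ (n - 1)) ^ (1 / ((n : ℝ) + 1)) := by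
  have hpow (y : ℝ) (hy : 0 ≤ y) (k : ℕ) :
      (y ^ k) ^ (1 / ((n : ℝ) + 1)) = y ^ ((k : ℝ) / (n + 1)) := by
    rw [← rpow_natCast, ← rpow_mul hy, mul_one_div]
  have : (0 : ℝ) ≤ ((n : ℝ) - 1) / (n + 1) := div_nonneg (by simpa using hn) (by positivity)
  rw [mul_rpow (x := (s ^ 2) ^ n) (by positivity) (by positivity), ← pow_mul, hpow s hs,
    hpow g hg, mul_rpow hs hg, ← mul_assoc, ← rpow_one_add' hs (by positivity),
    Nat.cast_sub hn, Nat.cast_one]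
  congr 2
  push_cast
  field_simp
  ring

theorem mul_rpow_mul_rpow_eq {n : ℕ} (hn : 1 ≤ n) {b s g : ℝ} (hb : 0 < b) (hs : 0 ≤ s)
    (hg : 0 ≤ g) :
    s / 2 * (2 / ((n : ℝ) + 1)) * b ^ (2 / ((n : ℝ) + 1) - 1) *
      ((b * s * g) ^ 2) ^ (((n : ℝ) - 1) / (2 * (n + 1)))
      = ((s ^ 2) ^ n * g ^ (n - 1)) ^ (1 / ((n : ℝ) + 1)) / (n + 1) := by
  have hsq : ((b * s * g) ^ 2) ^ (((n : ℝ) - 1) / (2 * (n + 1)))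
      = b ^ (((n : ℝ) - 1) / (n + 1)) * (s * g) ^ (((n : ℝ) - 1) / (n + 1)) := by
    rw [← rpow_natCast, ← rpow_mul (by positivity), mul_assoc, mul_rpow hb.le (by positivity)]
    congr 2 <;> push_cast <;> field_simp
  have hb1 : b ^ (2 / ((n : ℝ) + 1) - 1) * b ^ (((n : ℝ) - 1) / (n + 1)) = 1 := by
    rw [← rpow_add hb]
    convert rpow_zero b using 2
    field_simp
    ring
  rw [hsq, ← mul_mul_rpow_eq_pow_mul_pow_rpow hn hs hg]
  linear_combination (s * (s * g) ^ (((n : ℝ) - 1) / (n + 1)) / (n + 1)) * hb1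

theorem add_rpow_le_of_energy_decay {p : ℕ} (hp : 1 ≤ p) {θ : ℝ} (hθ : 0 < θ)
    {b lam g E : ℝ → ℝ} (hb : ContinuousOn b (Ici 0)) (hbpos : ∀ t ∈ Ici (0:ℝ), 0 < b t)
    (hb' : ∀ t > 0, HasDerivAt b (√(lam t) / 2) t) (hlam : ∀ t > 0, 0 ≤ lam t)
    (hg : ∀ t > 0, 0 ≤ g t) (halg : ∀ t > 0, lam t ^ p * g t ^ (p - 1) = θ)
    (hE : ContinuousOn E (Ici 0)) (hE0 : 0 < E 0) (hEnn : ∀ t ∈ Ici (0:ℝ), 0 ≤ E t)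
    (hE' : ∀ t > 0, ∃ e, HasDerivAt E e t ∧ e ≤ -(b t * √(lam t) * g t) ^ 2)
    {t : ℝ} (ht : 0 ≤ t) :
    b 0 + (θ ^ (1 / ((p:ℝ) + 1)) / (p + 1) * E 0 ^ (-(((p:ℝ) - 1) / (2 * (p + 1)))) *
      t ^ (1 + ((p:ℝ) - 1) / (2 * (p + 1)))) ^ (((p:ℝ) + 1) / 2) ≤ b t := by
  have hp' : (1:ℝ) ≤ p := by exact_mod_cast hp
  have hγ : (0:ℝ) ≤ ((p:ℝ) - 1) / (2 * (p + 1)) := div_nonneg (by linarith) (by positivity)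
  rcases ht.eq_or_lt with rfl | ht
  · rw [zero_rpow (by positivity), mul_zero, zero_rpow (by positivity), add_zero]
  have hgrowth := add_mul_rpow_le_of_hasDerivAt_mul_rpow_eq (f := fun s => b s ^ (2 / ((p:ℝ) + 1)))
    (W := fun s => (b s * √(lam s) * g s) ^ 2) (C := θ ^ (1 / ((p:ℝ) + 1)) / (p + 1)) hγ
    (by positivity)
    (hb.rpow_const fun s hs => Or.inl (hbpos s hs).ne')
    (fun s hs => (hb' s hs).rpow_const (Or.inl (hbpos s hs.le).ne')) (fun s _ => sq_nonneg _)
    (fun s hs => by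
      rw [mul_rpow_mul_rpow_eq hp (hbpos s hs.le) (sqrt_nonneg _) (hg s hs), sq_sqrt (hlam s hs),
        halg s hs])
    hE hE' hE0 ht (hEnn t ht.le)
  have := add_rpow_inv_le_of_rpow_add_le (hbpos 0 self_mem_Ici).le (hbpos t ht.le).le
    (by positivity) (by positivity) (div_le_one_of_le₀ (by linarith) (by positivity)) hgrowth
  rwa [inv_div] at this

theorem rpow_mul_rpow_le_rpow {p θ e t : ℝ} (hp : 1 ≤ p) (hθ : 0 < θ) (he : 0 < e) (ht : 0 ≤ t) :
    (θ ^ (2 / (3 * p + 1)) / ((p + 1) * e ^ ((p - 1) / (3 * p + 1)))) ^ ((3 * p + 1) / 4) *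
        t ^ ((3 * p + 1) / 4) ≤
      (θ ^ (1 / (p + 1)) / (p + 1) * e ^ (-((p - 1) / (2 * (p + 1)))) *
        t ^ (1 + (p - 1) / (2 * (p + 1)))) ^ ((p + 1) / 2) := by
  have hp1 : 0 < p + 1 := by linarith
  have h3 : (0:ℝ) < 3 * p + 1 := by linarith
  rw [mul_rpow (by positivity) (by positivity), ← rpow_mul ht]
  have hexp : (1 + (p - 1) / (2 * (p + 1))) * ((p + 1) / 2) = (3 * p + 1) / 4 := by
    field_simp; ring
  rw [hexp]
  refine mul_le_mul_of_nonneg_right ?_ (by positivity)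
  -- the two constants differ only in the power of `p + 1`: `(3p+1)/4` against `(p+1)/2`
  rw [← log_le_log_iff (by positivity) (by positivity), log_rpow (by positivity),
    log_rpow (by positivity), log_div (by positivity) (by positivity),
    log_mul (by positivity) (by positivity), log_mul (by positivity) (by positivity),
    log_div (by positivity) (by positivity), log_rpow hθ, log_rpow he, log_rpow hθ, log_rpow he]
  have hL : 0 ≤ log (p + 1) := log_nonneg (by linarith)
  have lhs : (3 * p + 1) / 4 *
      (2 / (3 * p + 1) * log θ - (log (p + 1) + (p - 1) / (3 * p + 1) * log e))
      = log θ / 2 - (3 * p + 1) / 4 * log (p + 1) - (p - 1) / 4 * log e := by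
    field_simp; ring
  have rhs : (p + 1) / 2 *
      (1 / (p + 1) * log θ - log (p + 1) + -((p - 1) / (2 * (p + 1))) * log e)
      = log θ / 2 - (p + 1) / 2 * log (p + 1) - (p - 1) / 4 * log e := by
    field_simp; ring
  rw [lhs, rhs]
  nlinarith

theorem stmt_6_general (d p : ℕ) (hp : 1 ≤ p)
    (Φ : EuclideanSpace ℝ (Fin d) → ℝ)
    (hconv : ConvexOn ℝ Set.univ Φ) (hsmooth : ContDiff ℝ 2 Φ)
    (θ c : ℝ) (hθ : θ ∈ Set.Ioo (0:ℝ) 1) (hc : 0 < c)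
    (x0 xstar : EuclideanSpace ℝ (Fin d)) (hx0 : gradient Φ x0 ≠ 0)
    (hstar : ∀ y, Φ xstar ≤ Φ y)
    (x v : ℝ → EuclideanSpace ℝ (Fin d)) (lam : ℝ → ℝ) (a : ℝ → ℝ)
    (hlamcont : ContinuousOn lam (Set.Ici 0))
    (hlampos : ∀ t ∈ Set.Ici (0:ℝ), 0 < lam t)
    (ha : ∀ t, a t = (1/4) * ((∫ s in (0:ℝ)..t, Real.sqrt (lam s)) + c) ^ 2)
    (hxdiff : ∀ t ∈ Set.Ici (0:ℝ), DifferentiableAt ℝ x t)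
    (hvdiff : ∀ t ∈ Set.Ici (0:ℝ), DifferentiableAt ℝ v t)
    (heqv : ∀ t ∈ Set.Ici (0:ℝ), deriv v t + deriv a t • gradient Φ (x t) = 0)
    (heqx : ∀ t ∈ Set.Ici (0:ℝ),
      deriv x t + (deriv a t / a t) • (x t - v t)
        + ((deriv a t) ^ 2 / a t) • gradient Φ (x t) = 0)
    (halg : ∀ t ∈ Set.Ici (0:ℝ), (lam t) ^ p * ‖gradient Φ (x t)‖ ^ (p - 1) = θ)
    (hx0' : x 0 = x0)
    (E : ℝ → ℝ)
    (hE : ∀ t, E t = a t * (Φ (x t) - Φ xstar) + (1/2) * ‖v t - xstar‖ ^ 2) :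
    0 < E 0 ∧
    ∀ t ∈ Set.Ici (0:ℝ),
      (c / 2 +
          (θ ^ (2 / (3 * (p:ℝ) + 1)) /
              (((p:ℝ) + 1) * (E 0) ^ (((p:ℝ) - 1) / (3 * (p:ℝ) + 1)))) ^
              ((3 * (p:ℝ) + 1) / 4) *
            t ^ ((3 * (p:ℝ) + 1) / 4)) ^ 2 ≤ a t := by
  obtain ⟨hθ0, -⟩ := hθ
  have hΦ : Differentiable ℝ Φ := hsmooth.differentiable two_ne_zero
  obtain ⟨b, hab, hb0, hbpos, hbcont, hb'⟩ := exists_sq_eq_of_eq_integral_sqrt hc hlamcont ha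
  have ha' : ∀ t > 0, HasDerivAt a (b t * √(lam t)) t := fun t ht =>
    (((hb' t ht).pow 2).congr_of_eventuallyEq (.of_forall hab)).congr_deriv (by push_cast; ring)
  have hEeq : E = lyapunovEnergy Φ xstar a x v := funext hE
  have hEcont : ContinuousOn E (Ici 0) := hEeq ▸ ContinuousOn.lyapunovEnergy hΦ.continuous
    ((hbcont.pow 2).congr fun t _ => hab t)
    (fun t ht => (hxdiff t ht).continuousAt.continuousWithinAt)
    (fun t ht => (hvdiff t ht).continuousAt.continuousWithinAt)
  have hE0 : 0 < E 0 := hEeq ▸ lyapunovEnergy_pos (by rw [hab, hb0]; positivity)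
    (hx0' ▸ lt_of_gradient_ne_zero hstar hx0)
  have hE' : ∀ t > 0, ∃ e, HasDerivAt E e t ∧
      e ≤ -(b t * √(lam t) * ‖gradient Φ (x t)‖) ^ 2 := fun t ht =>
    hEeq ▸ hasDerivAt_lyapunovEnergy_le hconv (hΦ _) (ha' t ht) (hxdiff t ht.le)
      (hvdiff t ht.le) (by rw [hab]; exact pow_pos (hbpos t ht.le) 2)
      (mul_nonneg (hbpos t ht.le).le (sqrt_nonneg _)) (heqv t ht.le) (heqx t ht.le)
  refine ⟨hE0, fun t (ht : 0 ≤ t) => ?_⟩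
  rw [hab]
  refine pow_le_pow_left₀ (by positivity) ?_ 2
  rw [← hb0]
  refine (add_le_add le_rfl
    (rpow_mul_rpow_le_rpow (p := p) (by exact_mod_cast hp) hθ0 hE0 ht)).trans ?_
  exact add_rpow_le_of_energy_decay hp hθ0 hbcont hbpos hb' (fun t ht => (hlampos t ht.le).le)
    (fun _ _ => norm_nonneg _) (fun t ht => halg t ht.le) hEcont hE0
    (fun t ht => hEeq ▸ lyapunovEnergy_nonneg hstar (by rw [hab]; positivity)) hE' ht

/-- along a global solution of the first-order system (FO) on `[0, ∞)`,
one has `E(0) > 0` and the lower bound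
`a(t) ≥ (c/2 + (θ^{2/(3p+1)}/((p+1)E(0)^{(p−1)/(3p+1)}))^{(3p+1)/4} t^{(3p+1)/4})²`. -/
theorem stmt_6 (d p : ℕ) (hd : 1 ≤ d) (hp : 1 ≤ p)
    (Φ : EuclideanSpace ℝ (Fin d) → ℝ)
    (hconv : ConvexOn ℝ Set.univ Φ) (hsmooth : ContDiff ℝ 2 Φ)
    (θ c : ℝ) (hθ : θ ∈ Set.Ioo (0:ℝ) 1) (hc : 0 < c)
    (x0 v0 xstar : EuclideanSpace ℝ (Fin d)) (hx0 : gradient Φ x0 ≠ 0)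
    (hstar : ∀ y, Φ xstar ≤ Φ y)
    (x v : ℝ → EuclideanSpace ℝ (Fin d)) (lam : ℝ → ℝ) (a : ℝ → ℝ)
    (hlamcont : ContinuousOn lam (Set.Ici 0))
    (hlampos : ∀ t ∈ Set.Ici (0:ℝ), 0 < lam t)
    (ha : ∀ t, a t = (1/4) * ((∫ s in (0:ℝ)..t, Real.sqrt (lam s)) + c) ^ 2)
    (hxdiff : ∀ t ∈ Set.Ici (0:ℝ), DifferentiableAt ℝ x t)
    (hvdiff : ∀ t ∈ Set.Ici (0:ℝ), DifferentiableAt ℝ v t)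
    (heqv : ∀ t ∈ Set.Ici (0:ℝ), deriv v t + deriv a t • gradient Φ (x t) = 0)
    (heqx : ∀ t ∈ Set.Ici (0:ℝ),
      deriv x t + (deriv a t / a t) • (x t - v t)
        + ((deriv a t) ^ 2 / a t) • gradient Φ (x t) = 0)
    (halg : ∀ t ∈ Set.Ici (0:ℝ), (lam t) ^ p * ‖gradient Φ (x t)‖ ^ (p - 1) = θ)
    (hx0' : x 0 = x0) (hv0' : v 0 = v0)
    (E : ℝ → ℝ)
    (hE : ∀ t, E t = a t * (Φ (x t) - Φ xstar) + (1/2) * ‖v t - xstar‖ ^ 2) :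
    0 < E 0 ∧
    ∀ t ∈ Set.Ici (0:ℝ),
      (c / 2 +
          (θ ^ (2 / (3 * (p:ℝ) + 1)) /
              (((p:ℝ) + 1) * (E 0) ^ (((p:ℝ) - 1) / (3 * (p:ℝ) + 1)))) ^
              ((3 * (p:ℝ) + 1) / 4) *
            t ^ ((3 * (p:ℝ) + 1) / 4)) ^ 2 ≤ a t :=
  stmt_6_general d p hp Φ hconv hsmooth θ c hθ hc x0 xstar hx0 hstar x v lam a hlamcont hlampos ha
    hxdiff hvdiff heqv heqx halg hx0' E hE
end

section
/- (Continuous Bihari–LaSalle estimate.) Let p ≥ 2 be an integer and C > 0. Suppose y : [0, ∞) → ℝ is differentiable with y(0) = 0, y(t) > 0 for all t > 0, and y′(t) ≥ (y(t)/(2C))^{(p−1)/(p+1)} for all t > 0. Then for every t ≥ 0: y(t)^{2/(p+1)} ≥ (2/(p+1))·(1/(2C))^{(p−1)/(p+1)}·t. -/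
/-!
With `α = 2/(p+1)` the exponent in the hypothesis is `1 - α`, so the chain rule turns
`y' ≥ (y/(2C))^(1-α)` into `(y^α)' = α y^(α-1) y' ≥ α (1/(2C))^(1-α)` wherever `y > 0`.
Since `y^α` vanishes at `0` and is continuous on `[0, ∞)`, the mean value theorem integrates
this constant lower bound.
-/

open Set Real

lemma rpow_div_rpow_mul_rpow_sub_one {x K : ℝ} (hx : 0 < x) (hK : 0 < K) (α : ℝ) :
    (x / K) ^ (1 - α) * x ^ (α - 1) = (1 / K) ^ (1 - α) := by
  rw [div_eq_mul_one_div x K, mul_rpow hx.le (by positivity), mul_right_comm,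
    ← rpow_add hx, sub_add_sub_cancel, sub_self, rpow_zero, one_mul]

lemma le_deriv_rpow_of_rpow_le_deriv {y : ℝ → ℝ} {s K α : ℝ} (hK : 0 < K) (hα : 0 ≤ α)
    (hys : 0 < y s) (hy : DifferentiableAt ℝ y s) (h : (y s / K) ^ (1 - α) ≤ deriv y s) :
    α * (1 / K) ^ (1 - α) ≤ deriv (fun s => y s ^ α) s :=
  calc α * (1 / K) ^ (1 - α) = α * ((y s / K) ^ (1 - α) * y s ^ (α - 1)) := by
        rw [rpow_div_rpow_mul_rpow_sub_one hys hK]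
    _ ≤ α * (deriv y s * y s ^ (α - 1)) := by gcongr
    _ = deriv (fun s => y s ^ α) s := by
        rw [(hy.hasDerivAt.rpow_const (Or.inl hys.ne')).deriv]; ring

lemma mul_le_of_le_deriv_of_eq_zero {g : ℝ → ℝ} {c : ℝ} (hg : ContinuousOn g (Ici 0))
    (hg' : DifferentiableOn ℝ g (Ioi 0)) (hc : ∀ s ∈ Ioi 0, c ≤ deriv g s) (hg0 : g 0 = 0)
    {t : ℝ} (ht : 0 ≤ t) : c * t ≤ g t := by
  simpa [hg0] using (convex_Ici (0 : ℝ)).mul_sub_le_image_sub_of_le_deriv hg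
    (by rwa [interior_Ici]) (by rwa [interior_Ici]) 0 self_mem_Ici t ht ht

theorem stmt_8_general (p : ℕ) (C : ℝ) (hC : 0 < C) (y : ℝ → ℝ)
    (hdiff : ∀ t ∈ Set.Ici (0:ℝ), DifferentiableAt ℝ y t)
    (hy0 : y 0 = 0) (hypos : ∀ t : ℝ, 0 < t → 0 < y t)
    (hineq : ∀ t : ℝ, 0 < t →
      (y t / (2 * C)) ^ (((p:ℝ) - 1) / ((p:ℝ) + 1)) ≤ deriv y t) :
    ∀ t : ℝ, 0 ≤ t →
      (2 / ((p:ℝ) + 1)) * (1 / (2 * C)) ^ (((p:ℝ) - 1) / ((p:ℝ) + 1)) * t ≤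
        (y t) ^ (2 / ((p:ℝ) + 1)) := by
  intro t ht
  have hα : 0 < 2 / ((p:ℝ) + 1) := by positivity
  have hexp : ((p:ℝ) - 1) / ((p:ℝ) + 1) = 1 - 2 / ((p:ℝ) + 1) := by field_simp; ring
  rw [hexp] at hineq ⊢
  refine mul_le_of_le_deriv_of_eq_zero (g := fun s => y s ^ (2 / ((p:ℝ) + 1))) ?_ ?_ ?_
    (by simp [hy0, zero_rpow hα.ne']) ht
  · exact ContinuousOn.rpow_const (fun s hs => (hdiff s hs).continuousAt.continuousWithinAt)
      fun _ _ => Or.inr hα.le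
  · exact fun s hs => ((hdiff s (Ioi_subset_Ici_self hs)).hasDerivAt.rpow_const
      (Or.inl (hypos s hs).ne')).differentiableAt.differentiableWithinAt
  · exact fun s hs => le_deriv_rpow_of_rpow_le_deriv (by positivity) hα.le (hypos s hs)
      (hdiff s (Ioi_subset_Ici_self hs)) (hineq s hs)

/-- continuous Bihari–LaSalle estimate: if `y` is differentiable on
`[0, ∞)` with `y(0) = 0`, `y(t) > 0` for `t > 0`, and
`y'(t) ≥ (y(t)/(2C))^{(p−1)/(p+1)}` for `t > 0`, then
`y(t)^{2/(p+1)} ≥ (2/(p+1)) (1/(2C))^{(p−1)/(p+1)} t` for all `t ≥ 0`. -/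
theorem stmt_8 (p : ℕ) (hp : 2 ≤ p) (C : ℝ) (hC : 0 < C) (y : ℝ → ℝ)
    (hdiff : ∀ t ∈ Set.Ici (0:ℝ), DifferentiableAt ℝ y t)
    (hy0 : y 0 = 0) (hypos : ∀ t : ℝ, 0 < t → 0 < y t)
    (hineq : ∀ t : ℝ, 0 < t →
      (y t / (2 * C)) ^ (((p:ℝ) - 1) / ((p:ℝ) + 1)) ≤ deriv y t) :
    ∀ t : ℝ, 0 ≤ t →
      (2 / ((p:ℝ) + 1)) * (1 / (2 * C)) ^ (((p:ℝ) - 1) / ((p:ℝ) + 1)) * t ≤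
        (y t) ^ (2 / ((p:ℝ) + 1)) :=
  stmt_8_general p C hC y hdiff hy0 hypos hineq
end

section
/- (Discrete Bihari–LaSalle estimate.) Let p ≥ 2 be an integer and C > 0. Suppose (y_k)_{k≥0} is a nondecreasing sequence of real numbers with y_0 = 0, y_k > 0 for all k ≥ 1, and y_k ≤ 2C·(y_k − y_{k−1})^{(p+1)/(p−1)} for all k ≥ 1. Then for every k ≥ 1: y_k^{2/(p+1)} ≥ (2/(p+1))·(1/(2C))^{(p−1)/(p+1)}·k. -/
/-!
With `γ = (p - 1)/(p + 1)`, the recursion says `y_k - y_{k-1} ≥ (y_k / 2C)^γ`. By concavity of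
`t ↦ t^(1-γ)` at `y_k`, the increment of `y^(1-γ)` is at least
`(1-γ) y_k^(-γ) (y_k - y_{k-1}) ≥ (1-γ) (2C)^(-γ)`, a constant because the powers of `y_k` cancel.
Summing these increments from `y_0 = 0` gives the linear lower bound on `y_k^(1-γ)`, and
`1 - γ = 2/(p + 1)`.
-/

open Real

theorem Real.mul_rpow_sub_one_mul_sub_le_rpow_sub_rpow {a b β : ℝ} (ha : 0 ≤ a) (hb : 0 < b)
    (hβ0 : 0 ≤ β) (hβ1 : β ≤ 1) :
    β * b ^ (β - 1) * (b - a) ≤ b ^ β - a ^ β := by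
  have hbernoulli : (a / b) ^ β ≤ 1 + β * (a / b - 1) := by
    simpa using rpow_one_add_le_one_add_mul_self (s := a / b - 1)
      (by linarith [div_nonneg ha hb.le]) hβ0 hβ1
  have hscale : a ^ β = (a / b) ^ β * b ^ β := by
    rw [← mul_rpow (div_nonneg ha hb.le) hb.le, div_mul_cancel₀ a hb.ne']
  have htangent : β * b ^ (β - 1) * (b - a) = β * (1 - a / b) * b ^ β := by
    rw [rpow_sub_one hb.ne']
    field_simp
  rw [hscale, htangent]
  nlinarith [rpow_nonneg hb.le β]

theorem Real.mul_one_div_rpow_le_rpow_sub_rpow_of_le_mul_rpow_inv {γ K a b : ℝ} (hγ0 : 0 < γ)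
    (hγ1 : γ ≤ 1) (hK : 0 < K) (ha : 0 ≤ a) (hab : a ≤ b) (hb : 0 < b)
    (h : b ≤ K * (b - a) ^ γ⁻¹) :
    (1 - γ) * (1 / K) ^ γ ≤ b ^ (1 - γ) - a ^ (1 - γ) := by
  have hdiff : (b / K) ^ γ ≤ b - a := by
    have hdiv : b / K ≤ (b - a) ^ γ⁻¹ := by rwa [div_le_iff₀' hK]
    calc (b / K) ^ γ ≤ ((b - a) ^ γ⁻¹) ^ γ := by gcongr
      _ = b - a := rpow_inv_rpow (by linarith) hγ0.ne'
  have hcancel : (1 / K) ^ γ = b ^ (1 - γ - 1) * (b / K) ^ γ := by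
    rw [div_eq_mul_one_div b K, mul_rpow hb.le (by positivity), ← mul_assoc, ← rpow_add hb]
    simp
  calc (1 - γ) * (1 / K) ^ γ = (1 - γ) * b ^ (1 - γ - 1) * (b / K) ^ γ := by
        rw [hcancel, mul_assoc]
    _ ≤ (1 - γ) * b ^ (1 - γ - 1) * (b - a) := by gcongr
    _ ≤ b ^ (1 - γ) - a ^ (1 - γ) :=
        mul_rpow_sub_one_mul_sub_le_rpow_sub_rpow ha hb (by linarith) (by linarith)

theorem mul_le_of_add_le_succ {f : ℕ → ℝ} {c : ℝ} (h0 : f 0 = 0) (hstep : ∀ n, c + f n ≤ f (n + 1))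
    (n : ℕ) : c * n ≤ f n := by
  induction n with
  | zero => simp [h0]
  | succ n ih =>
    push_cast
    linarith [hstep n]

/-- discrete Bihari–LaSalle estimate: if `(y_k)` is nondecreasing with
`y_0 = 0`, `y_k > 0` for `k ≥ 1`, and `y_k ≤ 2C (y_k − y_{k−1})^{(p+1)/(p−1)}` for
`k ≥ 1`, then `y_k^{2/(p+1)} ≥ (2/(p+1)) (1/(2C))^{(p−1)/(p+1)} k` for all `k ≥ 1`. -/
theorem stmt_10 (p : ℕ) (hp : 2 ≤ p) (C : ℝ) (hC : 0 < C) (y : ℕ → ℝ)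
    (hmono : Monotone y) (hy0 : y 0 = 0)
    (hypos : ∀ k : ℕ, 1 ≤ k → 0 < y k)
    (hineq : ∀ k : ℕ, 1 ≤ k →
      y k ≤ 2 * C * (y k - y (k - 1)) ^ (((p:ℝ) + 1) / ((p:ℝ) - 1))) :
    ∀ k : ℕ, 1 ≤ k →
      (2 / ((p:ℝ) + 1)) * (1 / (2 * C)) ^ (((p:ℝ) - 1) / ((p:ℝ) + 1)) * (k:ℝ) ≤
        (y k) ^ (2 / ((p:ℝ) + 1)) := by
  have hp' : (2:ℝ) ≤ p := by exact_mod_cast hp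
  have hexp : 2 / ((p:ℝ) + 1) = 1 - ((p:ℝ) - 1) / ((p:ℝ) + 1) := by
    field_simp
    ring
  have hexp_inv : ((p:ℝ) + 1) / ((p:ℝ) - 1) = (((p:ℝ) - 1) / ((p:ℝ) + 1))⁻¹ := (inv_div _ _).symm
  have hstep (n : ℕ) : (2 / ((p:ℝ) + 1)) * (1 / (2 * C)) ^ (((p:ℝ) - 1) / ((p:ℝ) + 1)) +
      y n ^ (2 / ((p:ℝ) + 1)) ≤ y (n + 1) ^ (2 / ((p:ℝ) + 1)) := by
    have hrec := hineq (n + 1) le_add_self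
    rw [Nat.add_sub_cancel, hexp_inv] at hrec
    have hincr := mul_one_div_rpow_le_rpow_sub_rpow_of_le_mul_rpow_inv
      (by apply div_pos <;> linarith)
      (div_le_one_of_le₀ (by linarith) (by linarith)) (by positivity)
      (hy0 ▸ hmono n.zero_le) (hmono n.le_succ) (hypos (n + 1) le_add_self) hrec
    rw [hexp]
    linarith
  have hy0' : y 0 ^ (2 / ((p:ℝ) + 1)) = 0 := by
    rw [hy0, zero_rpow (by positivity)]
  intro k _
  exact mul_le_of_add_le_succ hy0' hstep k
end

section
/- Suppose the sequences are generated by Algorithm II. Then for every integer k ≥ 1: ((1 − σ²)/2)·Σ_{i=1}^k (1/(λ_i γ_i))‖x_i − ṽ_{i−1}‖² ≤ E_0 − E_k. In particular, Φ(x_k) − Φ(x*) ≤ γ_k·E_0, ‖v_k − x*‖ ≤ √(2E_0), and Σ_{i=1}^k (1/(λ_i γ_i))‖x_i − ṽ_{i−1}‖² ≤ 2E_0/(1 − σ²). -/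
open scoped RealInnerProductSpace

/-!
The estimate is a discrete Lyapunov argument. Since `1/γ_{k+1} = (1-α)/γ_{k+1} + α/γ_{k+1}` and
`(1/γ_{k+1}) ṽ_k = ((1-α)/γ_{k+1}) x_k + (α/γ_{k+1}) v_k`, combining the ε-subgradient inequality at
`x_{k+1}` for `y = x_k` and `y = x*` with these weights bounds the change of the function-value
part of `E` by `(1/γ_{k+1}) (⟪x_{k+1} - ṽ_k, w⟫ + ε) + (α/γ_{k+1}) ⟪v_k - x*, w⟫`. The change of
`‖v - x*‖²/2` cancels the last term and adds `(α/γ_{k+1})² ‖w‖²/2 = (λ/γ_{k+1}) ‖w‖²/2`, and the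
relative-error criterion bounds what is left by `-(1-σ²)/(2λγ_{k+1}) ‖x_{k+1} - ṽ_k‖²`.
Telescoping gives the first claim; the others follow from `0 ≤ E_k ≤ E_0`.
-/

section

variable {F : Type*} [NormedAddCommGroup F]

noncomputable def lyapunov (Φ : F → ℝ) (xstar : F) (γ : ℝ) (x v : F) : ℝ :=
  (1 / γ) * (Φ x - Φ xstar) + (1 / 2) * ‖v - xstar‖ ^ 2

lemma div_mul_sub_le_lyapunov (Φ : F → ℝ) (xstar : F) (γ : ℝ) (x v : F) :
    (1 / γ) * (Φ x - Φ xstar) ≤ lyapunov Φ xstar γ x v :=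
  le_add_of_nonneg_right (by positivity)

lemma half_mul_norm_sq_le_lyapunov {Φ : F → ℝ} {xstar : F} {γ : ℝ} {x : F} (hγ : 0 < γ)
    (hmin : Φ xstar ≤ Φ x) (v : F) :
    (1 / 2) * ‖v - xstar‖ ^ 2 ≤ lyapunov Φ xstar γ x v :=
  le_add_of_nonneg_left (mul_nonneg (by positivity) (sub_nonneg.mpr hmin))

variable [InnerProductSpace ℝ F]

/-- `w ∈ ∂_ε Φ(x)`. -/
def IsEpsSubgradient (Φ : F → ℝ) (ε : ℝ) (x w : F) : Prop :=
  ∀ y, Φ x + ⟪y - x, w⟫ - ε ≤ Φ y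

lemma IsEpsSubgradient.add_mul_le {Φ : F → ℝ} {ε a b : ℝ} {x w : F}
    (h : IsEpsSubgradient Φ ε x w) (ha : 0 ≤ a) (hb : 0 ≤ b) (y z : F) :
    (a + b) * Φ x - a * Φ y - b * Φ z ≤ ⟪a • (x - y) + b • (x - z), w⟫ + (a + b) * ε := by
  have hy := mul_le_mul_of_nonneg_left (h y) ha
  have hz := mul_le_mul_of_nonneg_left (h z) hb
  rw [← neg_sub x y, inner_neg_left] at hy
  rw [← neg_sub x z, inner_neg_left] at hz
  rw [inner_add_left, real_inner_smul_left, real_inner_smul_left]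
  linarith

lemma inner_add_le_of_relative_error {σ l ε : ℝ} {u w : F} (hl : 0 < l)
    (h : ‖l • w + u‖ ^ 2 + 2 * l * ε ≤ σ ^ 2 * ‖u‖ ^ 2) :
    ⟪u, w⟫ + l / 2 * ‖w‖ ^ 2 + ε ≤ -((1 - σ ^ 2) / (2 * l)) * ‖u‖ ^ 2 := by
  rw [norm_add_sq_real, norm_smul, real_inner_smul_left, real_inner_comm, mul_pow,
    Real.norm_eq_abs, sq_abs] at h
  rw [← mul_le_mul_iff_right₀ (by positivity : 0 < 2 * l)]
  field_simp
  linarith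

theorem lyapunov_add_le_of_step {Φ : F → ℝ} {σ γ γ' α l ε : ℝ} {xstar x x' v v' vt w : F}
    (hγ : 0 < γ) (hγ' : 0 < γ') (hα : 0 < α) (hl : 0 < l)
    (hγ'eq : γ' = (1 - α) * γ) (hαsq : α ^ 2 = l * γ')
    (hvt : vt = (1 - α) • x + α • v) (hv' : v' = v - (α / γ') • w)
    (hw : IsEpsSubgradient Φ ε x' w)
    (herr : ‖l • w + x' - vt‖ ^ 2 + 2 * l * ε ≤ σ ^ 2 * ‖x' - vt‖ ^ 2) :
    lyapunov Φ xstar γ' x' v' + (1 - σ ^ 2) / 2 * (1 / (l * γ') * ‖x' - vt‖ ^ 2) ≤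
      lyapunov Φ xstar γ x v := by
  have h1α : 0 < 1 - α := pos_of_mul_pos_left (hγ'eq ▸ hγ') hγ.le
  have hweight : (1 - α) / γ' = 1 / γ := by rw [hγ'eq]; field_simp
  have hinv : 1 / γ + α / γ' = 1 / γ' := by rw [← hweight]; ring
  have hsub := hw.add_mul_le (by positivity : 0 ≤ (1 - α) / γ') (by positivity : 0 ≤ α / γ')
    x xstar
  have hcomb : ((1 - α) / γ') • (x' - x) + (α / γ') • (x' - xstar) =
      (1 / γ') • (x' - vt) + (α / γ') • (v - xstar) := by
    rw [hvt]; module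
  rw [hcomb, inner_add_left, real_inner_smul_left, real_inner_smul_left, hweight, hinv] at hsub
  have hv'norm : ‖v' - xstar‖ ^ 2 =
      ‖v - xstar‖ ^ 2 - 2 * (α / γ') * ⟪v - xstar, w⟫ + l / γ' * ‖w‖ ^ 2 := by
    have hβsq : (α / γ') ^ 2 = l / γ' := by rw [div_pow, hαsq]; field_simp
    rw [hv', sub_right_comm, norm_sub_sq_real, real_inner_smul_right, norm_smul, mul_pow,
      Real.norm_eq_abs, sq_abs, hβsq]
    ring
  have herr' := mul_le_mul_of_nonneg_left
    (inner_add_le_of_relative_error hl (by rwa [add_sub_assoc] at herr)) (by positivity : 0 ≤ 1 / γ')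
  unfold lyapunov
  rw [hv'norm]
  linear_combination hsub + herr' + Φ xstar * hinv

end

lemma sum_Icc_le_sub_of_add_le {E c : ℕ → ℝ} (h : ∀ k, E (k + 1) + c (k + 1) ≤ E k) (k : ℕ) :
    ∑ i ∈ Finset.Icc 1 k, c i ≤ E 0 - E k := by
  induction k with
  | zero => simp
  | succ k ih =>
    rw [Finset.sum_Icc_succ_top (by omega)]
    linarith [h k]

theorem stmt_13_general (d : ℕ)
    (Φ : EuclideanSpace ℝ (Fin d) → ℝ)
    (σ : ℝ) (hσ : σ ∈ Set.Ioo (0:ℝ) 1)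
    (xstar : EuclideanSpace ℝ (Fin d)) (hstar : ∀ y, Φ xstar ≤ Φ y)
    (x v w vt : ℕ → EuclideanSpace ℝ (Fin d)) (γ eps lam α E : ℕ → ℝ)
    -- Algorithm II
    (hγpos : ∀ k : ℕ, 0 < γ k)
    (hlampos : ∀ k : ℕ, 0 < lam (k+1))
    (hα : ∀ k : ℕ, α (k+1) ∈ Set.Ioo (0:ℝ) 1)
    (hαeq : ∀ k : ℕ, (α (k+1)) ^ 2 = lam (k+1) * ((1 - α (k+1)) * γ k))
    (hγ : ∀ k : ℕ, γ (k+1) = (1 - α (k+1)) * γ k)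
    (hvt : ∀ k : ℕ, vt k = (1 - α (k+1)) • x k + α (k+1) • v k)
    (hw : ∀ k : ℕ, ∀ y : EuclideanSpace ℝ (Fin d),
      Φ (x (k+1)) + ⟪y - x (k+1), w (k+1)⟫ - eps (k+1) ≤ Φ y)
    (herr : ∀ k : ℕ,
      ‖lam (k+1) • w (k+1) + x (k+1) - vt k‖ ^ 2 + 2 * lam (k+1) * eps (k+1) ≤
        σ ^ 2 * ‖x (k+1) - vt k‖ ^ 2)
    (hv : ∀ k : ℕ, v (k+1) = v k - (α (k+1) / γ (k+1)) • w (k+1))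
    -- discrete Lyapunov function
    (hE : ∀ k : ℕ, E k = (1 / γ k) * (Φ (x k) - Φ xstar) + (1/2) * ‖v k - xstar‖ ^ 2) :
    ∀ k : ℕ, 1 ≤ k →
      ((1 - σ ^ 2) / 2) *
          (∑ i ∈ Finset.Icc 1 k, (1 / (lam i * γ i)) * ‖x i - vt (i - 1)‖ ^ 2) ≤
        E 0 - E k ∧
      Φ (x k) - Φ xstar ≤ γ k * E 0 ∧
      ‖v k - xstar‖ ≤ Real.sqrt (2 * E 0) ∧
      (∑ i ∈ Finset.Icc 1 k, (1 / (lam i * γ i)) * ‖x i - vt (i - 1)‖ ^ 2) ≤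
        2 * E 0 / (1 - σ ^ 2) := by
  intro k _
  have hE' (k : ℕ) : E k = lyapunov Φ xstar (γ k) (x k) (v k) := hE k
  have hstep (k : ℕ) : E (k + 1) + (1 - σ ^ 2) / 2 *
      (1 / (lam (k + 1) * γ (k + 1)) * ‖x (k + 1) - vt k‖ ^ 2) ≤ E k := by
    rw [hE', hE']
    exact lyapunov_add_le_of_step (hγpos k) (hγpos (k + 1)) (hα k).1 (hlampos k) (hγ k)
      (hγ k ▸ hαeq k) (hvt k) (hv k) (hw k) (herr k)
  have hdecrease : (1 - σ ^ 2) / 2 *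
      ∑ i ∈ Finset.Icc 1 k, 1 / (lam i * γ i) * ‖x i - vt (i - 1)‖ ^ 2 ≤ E 0 - E k := by
    rw [Finset.mul_sum]
    exact sum_Icc_le_sub_of_add_le hstep k
  have hsum_nonneg : 0 ≤ ∑ i ∈ Finset.Icc 1 k, 1 / (lam i * γ i) * ‖x i - vt (i - 1)‖ ^ 2 := by
    refine Finset.sum_nonneg fun i hi => ?_
    obtain ⟨j, rfl⟩ : ∃ j, i = j + 1 := ⟨i - 1, by grind⟩
    have := hlampos j
    have := hγpos (j + 1)
    positivity
  have hσsq : 0 < 1 - σ ^ 2 := sub_pos.2 (pow_lt_one₀ hσ.1.le hσ.2 two_ne_zero)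
  have hE_half := hE' k ▸ half_mul_norm_sq_le_lyapunov (hγpos k) (hstar (x k)) (v k)
  have hEk_nonneg : 0 ≤ E k := le_trans (by positivity) hE_half
  have hEk_le : E k ≤ E 0 := by linarith [mul_nonneg (half_pos hσsq).le hsum_nonneg]
  refine ⟨hdecrease, ?_, ?_, ?_⟩
  · calc Φ (x k) - Φ xstar = γ k * ((1 / γ k) * (Φ (x k) - Φ xstar)) := by
          field_simp [(hγpos k).ne']
      _ ≤ γ k * E 0 := mul_le_mul_of_nonneg_left
          (((div_mul_sub_le_lyapunov Φ xstar _ _ (v k)).trans_eq (hE' k).symm).trans hEk_le)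
          (hγpos k).le
  · exact Real.le_sqrt_of_sq_le (by linarith)
  · rw [le_div_iff₀ hσsq]
    linarith

/-- for sequences generated by Algorithm II, for every `k ≥ 1`,
`((1−σ²)/2) Σ_{i=1}^k (1/(λ_i γ_i))‖x_i − ṽ_{i−1}‖² ≤ E_0 − E_k`; in particular
`Φ(x_k) − Φ(x*) ≤ γ_k E_0`, `‖v_k − x*‖ ≤ √(2E_0)` and the sum is `≤ 2E_0/(1−σ²)`. -/
theorem stmt_13 (d p : ℕ) (hd : 1 ≤ d) (hp : 1 ≤ p)
    (Φ : EuclideanSpace ℝ (Fin d) → ℝ)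
    (hconv : ConvexOn ℝ Set.univ Φ) (hsmooth : ContDiff ℝ 2 Φ)
    (σ θ : ℝ) (hσ : σ ∈ Set.Ioo (0:ℝ) 1) (hθ : 0 < θ)
    (xstar : EuclideanSpace ℝ (Fin d)) (hstar : ∀ y, Φ xstar ≤ Φ y)
    (x v w vt : ℕ → EuclideanSpace ℝ (Fin d)) (γ eps lam α E : ℕ → ℝ)
    (hproj : ∀ z : EuclideanSpace ℝ (Fin d), (∀ y, Φ z ≤ Φ y) → ‖v 0 - xstar‖ ≤ ‖v 0 - z‖)
    -- Algorithm II
    (hγ0 : γ 0 = 1) (hγpos : ∀ k : ℕ, 0 < γ k)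
    (hlampos : ∀ k : ℕ, 0 < lam (k+1)) (hepsnn : ∀ k : ℕ, 0 ≤ eps (k+1))
    (hα : ∀ k : ℕ, α (k+1) ∈ Set.Ioo (0:ℝ) 1)
    (hαeq : ∀ k : ℕ, (α (k+1)) ^ 2 = lam (k+1) * ((1 - α (k+1)) * γ k))
    (hγ : ∀ k : ℕ, γ (k+1) = (1 - α (k+1)) * γ k)
    (hvt : ∀ k : ℕ, vt k = (1 - α (k+1)) • x k + α (k+1) • v k)
    (hw : ∀ k : ℕ, ∀ y : EuclideanSpace ℝ (Fin d),
      Φ (x (k+1)) + ⟪y - x (k+1), w (k+1)⟫ - eps (k+1) ≤ Φ y)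
    (herr : ∀ k : ℕ,
      ‖lam (k+1) • w (k+1) + x (k+1) - vt k‖ ^ 2 + 2 * lam (k+1) * eps (k+1) ≤
        σ ^ 2 * ‖x (k+1) - vt k‖ ^ 2)
    (hls : ∀ k : ℕ, θ ≤ lam (k+1) * ‖x (k+1) - vt k‖ ^ (p - 1))
    (hv : ∀ k : ℕ, v (k+1) = v k - (α (k+1) / γ (k+1)) • w (k+1))
    -- discrete Lyapunov function
    (hE : ∀ k : ℕ, E k = (1 / γ k) * (Φ (x k) - Φ xstar) + (1/2) * ‖v k - xstar‖ ^ 2) :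
    ∀ k : ℕ, 1 ≤ k →
      ((1 - σ ^ 2) / 2) *
          (∑ i ∈ Finset.Icc 1 k, (1 / (lam i * γ i)) * ‖x i - vt (i - 1)‖ ^ 2) ≤
        E 0 - E k ∧
      Φ (x k) - Φ xstar ≤ γ k * E 0 ∧
      ‖v k - xstar‖ ≤ Real.sqrt (2 * E 0) ∧
      (∑ i ∈ Finset.Icc 1 k, (1 / (lam i * γ i)) * ‖x i - vt (i - 1)‖ ^ 2) ≤
        2 * E 0 / (1 - σ ^ 2) :=
  stmt_13_general d Φ σ hσ xstar hstar x v w vt γ eps lam α E hγpos hlampos hα hαeq hγ hvt hw herr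
    hv hE
end

section
/- Let (γ_k)_{k≥0}, (λ_k)_{k≥1}, (α_k)_{k≥1} be sequences of reals with γ_0 = 1, γ_k > 0, λ_k > 0, α_k ∈ (0,1), satisfying γ_{k+1} = (1 − α_{k+1})γ_k and α_{k+1}² = λ_{k+1}γ_{k+1} for every k ≥ 0. Then for every k ≥ 0: 1/√(γ_{k+1}) ≥ 1/√(γ_k) + (1/2)√(λ_{k+1}); consequently, for every k ≥ 0: γ_k ≤ (1 + (1/2)Σ_{j=1}^k √(λ_j))^{−2}. -/
/-!
Write `a = √γ_k`, `b = √γ_{k+1}`, `s = √λ_{k+1}`. Then `α_{k+1} = s b`, so the recursion reads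
`b² = (1 - s b) a²`, i.e. `(a - b)(a + b) = s a² b`. As `b ≤ a`, this gives `a - b ≥ s a b / 2`,
which is `1/b ≥ 1/a + s/2`. Summing these inequalities from `1/√γ_0 = 1` bounds `1/√γ_k` from
below, and squaring gives the bound on `γ_k`.
-/

open Finset Real

lemma one_div_add_half_mul_le_one_div_of_sq_eq {a b s : ℝ} (ha : 0 < a) (hb : 0 < b) (hs : 0 ≤ s)
    (h : b ^ 2 = (1 - s * b) * a ^ 2) : 1 / a + 1 / 2 * s ≤ 1 / b := by
  have hba : b ≤ a := by nlinarith [mul_nonneg hs hb.le]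
  rw [div_add' _ _ _ ha.ne', div_le_div_iff₀ ha hb]
  nlinarith [mul_pos ha hb, mul_nonneg hs (mul_pos ha hb).le]

lemma one_div_sqrt_add_half_mul_sqrt_le {γ γ' α l : ℝ} (hγ : 0 < γ) (hγ' : 0 < γ')
    (hα : 0 ≤ α) (hrec : γ' = (1 - α) * γ) (hαsq : α ^ 2 = l * γ') :
    1 / √γ + 1 / 2 * √l ≤ 1 / √γ' := by
  have hα_eq : α = √l * √γ' := by
    rw [← sqrt_mul' _ hγ'.le, ← hαsq, sqrt_sq hα]
  refine one_div_add_half_mul_le_one_div_of_sq_eq (sqrt_pos.2 hγ) (sqrt_pos.2 hγ') (sqrt_nonneg l) ?_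
  rw [sq_sqrt hγ.le, sq_sqrt hγ'.le, ← hα_eq, hrec]

lemma add_sum_Icc_le_of_add_le_succ {u c : ℕ → ℝ} (h : ∀ k, u k + c (k + 1) ≤ u (k + 1)) (k : ℕ) :
    u 0 + ∑ j ∈ Icc 1 k, c j ≤ u k := by
  induction k with
  | zero => simp
  | succ n ih =>
    rw [sum_Icc_succ_top (by omega), ← add_assoc]
    linarith [h n]

lemma le_inv_sq_of_le_one_div_sqrt {γ x : ℝ} (hγ : 0 < γ) (hx : 0 < x) (h : x ≤ 1 / √γ) :
    γ ≤ (x ^ 2)⁻¹ := by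
  rw [le_inv_comm₀ hγ (by positivity), ← sq_sqrt hγ.le, ← inv_pow, ← one_div]
  exact pow_le_pow_left₀ hx.le h 2

theorem stmt_14_general (γ lam α : ℕ → ℝ)
    (hγ0 : γ 0 = 1) (hγpos : ∀ k : ℕ, 0 < γ k)
    (hα : ∀ k : ℕ, α (k+1) ∈ Set.Ioo (0:ℝ) 1)
    (hγ : ∀ k : ℕ, γ (k+1) = (1 - α (k+1)) * γ k)
    (hαeq : ∀ k : ℕ, (α (k+1)) ^ 2 = lam (k+1) * γ (k+1)) :
    (∀ k : ℕ, 1 / Real.sqrt (γ k) + (1/2) * Real.sqrt (lam (k+1)) ≤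
      1 / Real.sqrt (γ (k+1))) ∧
    ∀ k : ℕ, γ k ≤ ((1 + (1/2) * ∑ j ∈ Finset.Icc 1 k, Real.sqrt (lam j)) ^ 2)⁻¹ := by
  have step (k : ℕ) : 1 / √(γ k) + 1 / 2 * √(lam (k + 1)) ≤ 1 / √(γ (k + 1)) :=
    one_div_sqrt_add_half_mul_sqrt_le (hγpos k) (hγpos (k + 1)) (hα k).1.le (hγ k) (hαeq k)
  refine ⟨step, fun k => le_inv_sq_of_le_one_div_sqrt (hγpos k) ?_ ?_⟩
  · positivity
  · simpa [hγ0, mul_sum] using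
      add_sum_Icc_le_of_add_le_succ (u := fun k => 1 / √(γ k)) (c := fun j => 1 / 2 * √(lam j))
        step k

/-- if `γ_0 = 1`, `γ_k > 0`, `λ_k > 0`, `α_k ∈ (0,1)`,
`γ_{k+1} = (1 − α_{k+1})γ_k` and `α_{k+1}² = λ_{k+1}γ_{k+1}`, then
`1/√γ_{k+1} ≥ 1/√γ_k + (1/2)√λ_{k+1}` for all `k ≥ 0`; consequently
`γ_k ≤ (1 + (1/2)Σ_{j=1}^k √λ_j)^{−2}` for all `k ≥ 0`. -/
theorem stmt_14 (γ lam α : ℕ → ℝ)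
    (hγ0 : γ 0 = 1) (hγpos : ∀ k : ℕ, 0 < γ k)
    (hlampos : ∀ k : ℕ, 0 < lam (k+1))
    (hα : ∀ k : ℕ, α (k+1) ∈ Set.Ioo (0:ℝ) 1)
    (hγ : ∀ k : ℕ, γ (k+1) = (1 - α (k+1)) * γ k)
    (hαeq : ∀ k : ℕ, (α (k+1)) ^ 2 = lam (k+1) * γ (k+1)) :
    (∀ k : ℕ, 1 / Real.sqrt (γ k) + (1/2) * Real.sqrt (lam (k+1)) ≤
      1 / Real.sqrt (γ (k+1))) ∧
    ∀ k : ℕ, γ k ≤ ((1 + (1/2) * ∑ j ∈ Finset.Icc 1 k, Real.sqrt (lam j)) ^ 2)⁻¹ :=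
  stmt_14_general γ lam α hγ0 hγpos hα hγ hαeq
end

section
/- Suppose the sequences are generated by Algorithm II. Then for every integer k ≥ 1 there exists an index i with 1 ≤ i ≤ k such that simultaneously λ_i‖w_i‖² ≤ ((1 + σ)/(1 − σ))·(2E_0/Σ_{j=1}^k γ_j^{−1}) and ε_i ≤ (σ²/(2(1 − σ²)))·(2E_0/Σ_{j=1}^k γ_j^{−1}). -/
/-!
Each iteration decreases the Lyapunov function `E`: adding the ε-subgradient inequalities at
`x_k` and `x*` with weights `1 - α` and `α`, and using `α² = λ γ'`, gives
`γ_{k+1} (E_{k+1} - E_k) ≤ ⟪x_{k+1} - ṽ_k, w⟫ + ε + λ‖w‖²/2`, which the relative-error criterion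
bounds by `-(1 - σ²) ‖x_{k+1} - ṽ_k‖² / (2λ)`. The same criterion bounds `λ‖w‖²` and `ε` by
multiples of `γ_{k+1} (E_k - E_{k+1})`. Finally `E ≥ 0`, so the sum of the `γ_i⁻¹`-weighted
decreases `γ_i (E_{i-1} - E_i)` telescopes to at most `E_0`, and the smallest of them is at most
`E_0 / Σ γ_j⁻¹`.
-/

open scoped RealInnerProductSpace

theorem sum_Icc_one_sub_telescope (E : ℕ → ℝ) (k : ℕ) :
    ∑ j ∈ Finset.Icc 1 k, (E (j - 1) - E j) = E 0 - E k := by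
  induction k with
  | zero => simp
  | succ k ih => rw [Finset.sum_Icc_succ_top (by omega), ih, Nat.add_sub_cancel]; ring

theorem exists_mul_sub_le_div_sum_inv {c E : ℕ → ℝ} (hc : ∀ j, 0 < c j) {k : ℕ} (hk : 1 ≤ k)
    (hEk : 0 ≤ E k) :
    ∃ m < k, c (m + 1) * (E m - E (m + 1)) ≤ E 0 / ∑ j ∈ Finset.Icc 1 k, (c j)⁻¹ := by
  set S := ∑ j ∈ Finset.Icc 1 k, (c j)⁻¹
  have hS : 0 < S := Finset.sum_pos (fun j _ => inv_pos.mpr (hc j)) (Finset.nonempty_Icc.mpr hk)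
  have hsum : ∑ j ∈ Finset.Icc 1 k, (E (j - 1) - E j) ≤
      ∑ j ∈ Finset.Icc 1 k, (c j)⁻¹ * (E 0 / S) := by
    rw [sum_Icc_one_sub_telescope, ← Finset.sum_mul, mul_div_cancel₀ _ hS.ne']
    linarith
  obtain ⟨i, hi, hle⟩ := Finset.exists_le_of_sum_le (Finset.nonempty_Icc.mpr hk) hsum
  obtain ⟨hi1, hik⟩ := Finset.mem_Icc.mp hi
  obtain ⟨m, rfl⟩ := Nat.exists_eq_add_of_le' hi1
  refine ⟨m, by omega, ?_⟩
  rw [Nat.add_sub_cancel] at hle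
  rwa [← le_inv_mul_iff₀ (hc _)]

variable {F : Type*} [NormedAddCommGroup F]

theorem lyapunov_nonneg {Φ : F → ℝ} {xstar : F} (hstar : ∀ y, Φ xstar ≤ Φ y) {γ : ℝ} (hγ : 0 < γ)
    (x v : F) : 0 ≤ lyapunov Φ xstar γ x v := by
  unfold lyapunov
  have := sub_nonneg.mpr (hstar x)
  positivity

variable [InnerProductSpace ℝ F]

/-- One iteration `k → k + 1` of Algorithm II: `x, v, vt = x_k, v_k, ṽ_k`,
`x', v' = x_{k+1}, v_{k+1}`, `γ, γ' = γ_k, γ_{k+1}`, and `w, α, lam, ε` carry the index `k + 1`. -/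
structure IsAcceleratedHPEStep (Φ : F → ℝ) (σ : ℝ) (x v vt x' v' w : F) (γ γ' α lam ε : ℝ) :
    Prop where
  γ_pos : 0 < γ
  α_mem : α ∈ Set.Ioo (0 : ℝ) 1
  α_sq : α ^ 2 = lam * ((1 - α) * γ)
  γ'_eq : γ' = (1 - α) * γ
  vt_eq : vt = (1 - α) • x + α • v
  subgrad : ∀ y, Φ x' + ⟪y - x', w⟫ - ε ≤ Φ y
  err : ‖lam • w + x' - vt‖ ^ 2 + 2 * lam * ε ≤ σ ^ 2 * ‖x' - vt‖ ^ 2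
  v'_eq : v' = v - (α / γ') • w

theorem le_convex_comb_of_subgrad {Φ : F → ℝ} {x w : F} {ε : ℝ}
    (h : ∀ y, Φ x + ⟪y - x, w⟫ - ε ≤ Φ y) (y z : F) {α : ℝ} (hα0 : 0 ≤ α) (hα1 : α ≤ 1) :
    Φ x ≤ (1 - α) * Φ y + α * Φ z - ⟪(1 - α) • y + α • z - x, w⟫ + ε := by
  have hy := mul_le_mul_of_nonneg_left (h y) (sub_nonneg.mpr hα1)
  have hz := mul_le_mul_of_nonneg_left (h z) hα0
  have hcomb : ⟪(1 - α) • y + α • z - x, w⟫ = (1 - α) * ⟪y - x, w⟫ + α * ⟪z - x, w⟫ := by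
    rw [← real_inner_smul_left, ← real_inner_smul_left, ← inner_add_left]
    congr 1
    module
  rw [hcomb]
  nlinarith

namespace IsAcceleratedHPEStep

variable {Φ : F → ℝ} {σ : ℝ} {x v vt x' v' w : F} {γ γ' α lam ε : ℝ}

theorem eps_nonneg (h : IsAcceleratedHPEStep Φ σ x v vt x' v' w γ γ' α lam ε) : 0 ≤ ε := by
  simpa using h.subgrad x'

theorem γ'_pos (h : IsAcceleratedHPEStep Φ σ x v vt x' v' w γ γ' α lam ε) : 0 < γ' := by
  rw [h.γ'_eq]
  exact mul_pos (sub_pos.mpr h.α_mem.2) h.γ_pos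

theorem lam_pos (h : IsAcceleratedHPEStep Φ σ x v vt x' v' w γ γ' α lam ε) : 0 < lam := by
  have hα := h.α_mem.1
  have h' := h.α_sq
  rw [← h.γ'_eq] at h'
  exact pos_of_mul_pos_left (h' ▸ pow_pos hα 2) h.γ'_pos.le

theorem lyapunov_sub_le (h : IsAcceleratedHPEStep Φ σ x v vt x' v' w γ γ' α lam ε) (xstar : F) :
    γ' * (lyapunov Φ xstar γ' x' v' - lyapunov Φ xstar γ x v) ≤
      ⟪x' - vt, w⟫ + ε + lam / 2 * ‖w‖ ^ 2 := by
  have hγ := h.γ_pos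
  have hγ' := h.γ'_pos
  have hP := le_convex_comb_of_subgrad h.subgrad x xstar h.α_mem.1.le h.α_mem.2.le
  have hvec : (1 - α) • x + α • xstar - x' = -(x' - vt) - α • (v - xstar) := by
    rw [h.vt_eq]; module
  rw [hvec, inner_sub_left, inner_neg_left, real_inner_smul_left] at hP
  have hv : ‖v' - xstar‖ ^ 2 = ‖v - xstar‖ ^ 2 - 2 * (α / γ') * ⟪v - xstar, w⟫
      + (α / γ') ^ 2 * ‖w‖ ^ 2 := by
    rw [h.v'_eq, sub_right_comm, norm_sub_sq_real, real_inner_smul_right, norm_smul,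
      mul_pow, Real.norm_eq_abs, sq_abs]
    ring
  have hα2 : α ^ 2 / γ' = lam := by rw [h.α_sq, ← h.γ'_eq]; field_simp
  have hγγ' : γ' / γ = 1 - α := by rw [h.γ'_eq]; field_simp
  have hexpand : γ' * (lyapunov Φ xstar γ' x' v' - lyapunov Φ xstar γ x v) =
      Φ x' - Φ xstar - α * ⟪v - xstar, w⟫ + lam / 2 * ‖w‖ ^ 2
        - (1 - α) * (Φ x - Φ xstar) := by
    unfold lyapunov
    rw [hv, ← hα2, ← hγγ']
    field_simp
    ring
  rw [hexpand]
  linarith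

theorem sq_norm_le_lyapunov_decrease (h : IsAcceleratedHPEStep Φ σ x v vt x' v' w γ γ' α lam ε)
    (xstar : F) :
    (1 - σ ^ 2) * ‖x' - vt‖ ^ 2 ≤
      2 * lam * (γ' * (lyapunov Φ xstar γ x v - lyapunov Φ xstar γ' x' v')) := by
  have hlam := h.lam_pos
  have hdec := mul_le_mul_of_nonneg_left (h.lyapunov_sub_le xstar) (by positivity : 0 ≤ 2 * lam)
  have hnorm : ‖lam • w + x' - vt‖ ^ 2 =
      lam ^ 2 * ‖w‖ ^ 2 + 2 * lam * ⟪x' - vt, w⟫ + ‖x' - vt‖ ^ 2 := by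
    rw [add_sub_assoc, norm_add_sq_real, real_inner_smul_left, real_inner_comm, norm_smul,
      mul_pow, Real.norm_eq_abs, sq_abs]
    ring
  nlinarith [h.err]

theorem lam_mul_norm_le (h : IsAcceleratedHPEStep Φ σ x v vt x' v' w γ γ' α lam ε) (hσ : 0 ≤ σ) :
    lam * ‖w‖ ≤ (1 + σ) * ‖x' - vt‖ := by
  have hlam := h.lam_pos
  have herr : ‖lam • w + (x' - vt)‖ ≤ σ * ‖x' - vt‖ := by
    refine (sq_le_sq₀ (norm_nonneg _) (by positivity)).mp ?_
    rw [← add_sub_assoc, mul_pow]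
    nlinarith [h.err, h.eps_nonneg]
  have htri := norm_sub_le (lam • w + (x' - vt)) (x' - vt)
  rw [add_sub_cancel_right, norm_smul, Real.norm_eq_abs, abs_of_pos hlam] at htri
  linarith

theorem mul_lam_mul_sq_norm_le (h : IsAcceleratedHPEStep Φ σ x v vt x' v' w γ γ' α lam ε)
    (hσ0 : 0 ≤ σ) (hσ1 : σ ≤ 1) (xstar : F) :
    (1 - σ) * (lam * ‖w‖ ^ 2) ≤
      2 * (1 + σ) * (γ' * (lyapunov Φ xstar γ x v - lyapunov Φ xstar γ' x' v')) := by
  have hlam := h.lam_pos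
  have hlw := h.lam_mul_norm_le hσ0
  have hsq : (lam * ‖w‖) ^ 2 ≤ ((1 + σ) * ‖x' - vt‖) ^ 2 := by gcongr
  have hdec := h.sq_norm_le_lyapunov_decrease xstar
  refine le_of_mul_le_mul_left ?_ hlam
  nlinarith [mul_le_mul_of_nonneg_left hsq (sub_nonneg.mpr hσ1)]

theorem mul_eps_le (h : IsAcceleratedHPEStep Φ σ x v vt x' v' w γ γ' α lam ε)
    (hσ : σ ^ 2 ≤ 1) (xstar : F) :
    (1 - σ ^ 2) * ε ≤ σ ^ 2 * (γ' * (lyapunov Φ xstar γ x v - lyapunov Φ xstar γ' x' v')) := by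
  have hlam := h.lam_pos
  have hdec := h.sq_norm_le_lyapunov_decrease xstar
  have hε : 2 * lam * ε ≤ σ ^ 2 * ‖x' - vt‖ ^ 2 := by
    nlinarith [h.err, sq_nonneg ‖lam • w + x' - vt‖]
  refine le_of_mul_le_mul_left ?_ (by positivity : 0 < 2 * lam)
  nlinarith [mul_le_mul_of_nonneg_left hε (sub_nonneg.mpr hσ), sq_nonneg σ]

end IsAcceleratedHPEStep

theorem stmt_15_general (d : ℕ)
    (Φ : EuclideanSpace ℝ (Fin d) → ℝ)
    (σ : ℝ) (hσ : σ ∈ Set.Ioo (0:ℝ) 1)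
    (xstar : EuclideanSpace ℝ (Fin d)) (hstar : ∀ y, Φ xstar ≤ Φ y)
    (x v w vt : ℕ → EuclideanSpace ℝ (Fin d)) (γ eps lam α E : ℕ → ℝ)
    (hγpos : ∀ k : ℕ, 0 < γ k)
    (hα : ∀ k : ℕ, α (k+1) ∈ Set.Ioo (0:ℝ) 1)
    (hαeq : ∀ k : ℕ, (α (k+1)) ^ 2 = lam (k+1) * ((1 - α (k+1)) * γ k))
    (hγ : ∀ k : ℕ, γ (k+1) = (1 - α (k+1)) * γ k)
    (hvt : ∀ k : ℕ, vt k = (1 - α (k+1)) • x k + α (k+1) • v k)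
    (hw : ∀ k : ℕ, ∀ y : EuclideanSpace ℝ (Fin d),
      Φ (x (k+1)) + ⟪y - x (k+1), w (k+1)⟫ - eps (k+1) ≤ Φ y)
    (herr : ∀ k : ℕ,
      ‖lam (k+1) • w (k+1) + x (k+1) - vt k‖ ^ 2 + 2 * lam (k+1) * eps (k+1) ≤
        σ ^ 2 * ‖x (k+1) - vt k‖ ^ 2)
    (hv : ∀ k : ℕ, v (k+1) = v k - (α (k+1) / γ (k+1)) • w (k+1))
    (hE : ∀ k : ℕ, E k = (1 / γ k) * (Φ (x k) - Φ xstar) + (1/2) * ‖v k - xstar‖ ^ 2) :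
    ∀ k : ℕ, 1 ≤ k → ∃ i : ℕ, 1 ≤ i ∧ i ≤ k ∧
      lam i * ‖w i‖ ^ 2 ≤
        ((1 + σ) / (1 - σ)) * (2 * E 0 / ∑ j ∈ Finset.Icc 1 k, (γ j)⁻¹) ∧
      eps i ≤ (σ ^ 2 / (2 * (1 - σ ^ 2))) *
        (2 * E 0 / ∑ j ∈ Finset.Icc 1 k, (γ j)⁻¹) := by
  intro k hk
  obtain ⟨hσ0, hσ1⟩ := hσ
  have hE' : ∀ n, E n = lyapunov Φ xstar (γ n) (x n) (v n) := hE
  have step (n : ℕ) : IsAcceleratedHPEStep Φ σ (x n) (v n) (vt n) (x (n+1)) (v (n+1)) (w (n+1))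
      (γ n) (γ (n+1)) (α (n+1)) (lam (n+1)) (eps (n+1)) :=
    ⟨hγpos n, hα n, hαeq n, hγ n, hvt n, hw n, herr n, hv n⟩
  obtain ⟨m, hm, hdec⟩ := exists_mul_sub_le_div_sum_inv hγpos hk
    ((hE' k).symm ▸ lyapunov_nonneg hstar (hγpos k) (x k) (v k))
  have hw_le := (step m).mul_lam_mul_sq_norm_le hσ0.le hσ1.le xstar
  have heps_le := (step m).mul_eps_le (by nlinarith) xstar
  rw [← hE', ← hE'] at hw_le heps_le
  have hdec2 : 2 * (γ (m + 1) * (E m - E (m + 1))) ≤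
      2 * E 0 / ∑ j ∈ Finset.Icc 1 k, (γ j)⁻¹ := by
    rw [mul_div_assoc]; linarith
  refine ⟨m + 1, by omega, hm, ?_, ?_⟩
  · refine le_trans ?_ (mul_le_mul_of_nonneg_left hdec2 (by bound))
    rw [div_mul_eq_mul_div, le_div_iff₀ (by linarith)]
    linarith
  · refine le_trans ?_ (mul_le_mul_of_nonneg_left hdec2 (by bound))
    rw [div_mul_eq_mul_div, le_div_iff₀ (by nlinarith)]
    linarith

/-- for sequences generated by Algorithm II, for every `k ≥ 1` there is
`1 ≤ i ≤ k` with simultaneously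
`λ_i‖w_i‖² ≤ ((1+σ)/(1−σ))·(2E_0/Σ_{j=1}^k γ_j⁻¹)` and
`ε_i ≤ (σ²/(2(1−σ²)))·(2E_0/Σ_{j=1}^k γ_j⁻¹)`. -/
theorem stmt_15 (d p : ℕ) (hd : 1 ≤ d) (hp : 1 ≤ p)
    (Φ : EuclideanSpace ℝ (Fin d) → ℝ)
    (hconv : ConvexOn ℝ Set.univ Φ) (hsmooth : ContDiff ℝ 2 Φ)
    (σ θ : ℝ) (hσ : σ ∈ Set.Ioo (0:ℝ) 1) (hθ : 0 < θ)
    (xstar : EuclideanSpace ℝ (Fin d)) (hstar : ∀ y, Φ xstar ≤ Φ y)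
    (x v w vt : ℕ → EuclideanSpace ℝ (Fin d)) (γ eps lam α E : ℕ → ℝ)
    (hproj : ∀ z : EuclideanSpace ℝ (Fin d), (∀ y, Φ z ≤ Φ y) → ‖v 0 - xstar‖ ≤ ‖v 0 - z‖)
    (hγ0 : γ 0 = 1) (hγpos : ∀ k : ℕ, 0 < γ k)
    (hlampos : ∀ k : ℕ, 0 < lam (k+1)) (hepsnn : ∀ k : ℕ, 0 ≤ eps (k+1))
    (hα : ∀ k : ℕ, α (k+1) ∈ Set.Ioo (0:ℝ) 1)
    (hαeq : ∀ k : ℕ, (α (k+1)) ^ 2 = lam (k+1) * ((1 - α (k+1)) * γ k))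
    (hγ : ∀ k : ℕ, γ (k+1) = (1 - α (k+1)) * γ k)
    (hvt : ∀ k : ℕ, vt k = (1 - α (k+1)) • x k + α (k+1) • v k)
    (hw : ∀ k : ℕ, ∀ y : EuclideanSpace ℝ (Fin d),
      Φ (x (k+1)) + ⟪y - x (k+1), w (k+1)⟫ - eps (k+1) ≤ Φ y)
    (herr : ∀ k : ℕ,
      ‖lam (k+1) • w (k+1) + x (k+1) - vt k‖ ^ 2 + 2 * lam (k+1) * eps (k+1) ≤
        σ ^ 2 * ‖x (k+1) - vt k‖ ^ 2)
    (hls : ∀ k : ℕ, θ ≤ lam (k+1) * ‖x (k+1) - vt k‖ ^ (p - 1))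
    (hv : ∀ k : ℕ, v (k+1) = v k - (α (k+1) / γ (k+1)) • w (k+1))
    (hE : ∀ k : ℕ, E k = (1 / γ k) * (Φ (x k) - Φ xstar) + (1/2) * ‖v k - xstar‖ ^ 2) :
    ∀ k : ℕ, 1 ≤ k → ∃ i : ℕ, 1 ≤ i ∧ i ≤ k ∧
      lam i * ‖w i‖ ^ 2 ≤
        ((1 + σ) / (1 - σ)) * (2 * E 0 / ∑ j ∈ Finset.Icc 1 k, (γ j)⁻¹) ∧
      eps i ≤ (σ ^ 2 / (2 * (1 - σ ^ 2))) *
        (2 * E 0 / ∑ j ∈ Finset.Icc 1 k, (γ j)⁻¹) :=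
  stmt_15_general d Φ σ hσ xstar hstar x v w vt γ eps lam α E hγpos hα hαeq hγ hvt hw herr hv hE
end

section
/- Suppose the sequences are generated by Algorithm II, and assume E_0 > 0 if p ≥ 2. Then for every integer k ≥ 1: γ_k ≤ ((p+1)^{(3p+1)/2}/θ)·(2E_0/(1 − σ²))^{(p−1)/2}·k^{−(3p+1)/2}. -/
/-!
Put `A k = 1 / γ k` and `a = A (k+1) - A k = α (k+1) / γ (k+1)`, so that the step rule reads
`a² = λ (k+1) · A (k+1)`. Adding the ε-subgradient inequalities at `x*` and at `x k` (weights `a`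
and `A k`) to the relative error criterion shows that `E` decreases at least by
`(1 - σ²)/2 · δ k`, where `δ k = A (k+1) ‖x (k+1) - ṽ k‖² / λ (k+1)`; since `E ≥ 0`, the `δ k` sum
to at most `2 E 0 / (1 - σ²)`. With `u k = a · A (k+1) ^ (-p/(p+1))`, the large-step condition
becomes `θ ≤ u k ^ (p+1) δ k ^ ((p-1)/2)`, and concavity of `t ↦ t ^ (1/(p+1))` gives
`∑ u ≤ (p+1) A K ^ (1/(p+1))`. Hölder's inequality with exponents `2(p+1)/(3p+1)` and
`(p-1)/(3p+1)` combines the two sums into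
`θ K ^ ((3p+1)/2) ≤ (p+1) ^ (p+1) (2 E 0 / (1 - σ²)) ^ ((p-1)/2) A K`.
-/

open scoped RealInnerProductSpace
open Real Finset

theorem mul_sub_mul_rpow_sub_one_le_rpow_sub_rpow {s a b : ℝ} (hs0 : 0 ≤ s) (hs1 : s ≤ 1)
    (hb : 0 < b) (hba : b ≤ a) :
    s * (a - b) * a ^ (s - 1) ≤ a ^ s - b ^ s := by
  have ha : 0 < a := hb.trans_le hba
  have bernoulli := rpow_one_add_le_one_add_mul_self (s := b / a - 1)
    (by linarith [div_nonneg hb.le ha.le]) hs0 hs1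
  rw [add_sub_cancel, div_rpow hb.le ha.le, div_le_iff₀ (rpow_pos_of_pos ha s)] at bernoulli
  rw [rpow_sub_one ha.ne']
  have : (1 + s * (b / a - 1)) * a ^ s = a ^ s - s * (a - b) * (a ^ s / a) := by
    field_simp; ring
  linarith

theorem sum_mul_rpow_sub_one_le {A : ℕ → ℝ} (hA0 : 0 < A 0) (hA : Monotone A) {s : ℝ}
    (hs0 : 0 ≤ s) (hs1 : s ≤ 1) (K : ℕ) :
    s * ∑ j ∈ range K, (A (j + 1) - A j) * A (j + 1) ^ (s - 1) ≤ A K ^ s - A 0 ^ s := by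
  rw [← sum_range_sub (fun j => A j ^ s), mul_sum]
  refine sum_le_sum fun j _ => ?_
  rw [← mul_assoc]
  exact mul_sub_mul_rpow_sub_one_le_rpow_sub_rpow hs0 hs1 (hA0.trans_le (hA (Nat.zero_le j)))
    (hA j.le_succ)

theorem sum_rpow_mul_rpow_le {ι : Type*} (s : Finset ι) {u δ : ι → ℝ}
    (hu : ∀ i ∈ s, 0 ≤ u i) (hδ : ∀ i ∈ s, 0 ≤ δ i) {a b : ℝ} (ha : 0 < a) (hb : 0 ≤ b)
    (hab : a + b = 1) :
    ∑ i ∈ s, u i ^ a * δ i ^ b ≤ (∑ i ∈ s, u i) ^ a * (∑ i ∈ s, δ i) ^ b := by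
  rcases hb.eq_or_lt with rfl | hb
  · simp [show a = 1 by linarith]
  have := inner_le_Lp_mul_Lq_of_nonneg s (HolderConjugate.inv_inv ha hb hab)
    (f := fun i => u i ^ a) (g := fun i => δ i ^ b) (fun i hi => rpow_nonneg (hu i hi) a)
    (fun i hi => rpow_nonneg (hδ i hi) b)
  have cancel : ∀ {x c : ℝ}, 0 ≤ x → c ≠ 0 → (x ^ c) ^ c⁻¹ = x := fun hx hc => by
    rw [← rpow_mul hx, mul_inv_cancel₀ hc, rpow_one]
  rwa [sum_congr rfl fun i hi => cancel (hu i hi) ha.ne',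
    sum_congr rfl fun i hi => cancel (hδ i hi) hb.ne', one_div, one_div, inv_inv, inv_inv] at this

theorem card_rpow_mul_le_sum_rpow_mul_sum_rpow {ι : Type*} (s : Finset ι) {u δ : ι → ℝ}
    {θ a b : ℝ} (hθ : 0 ≤ θ) (ha : 0 < a) (hb : 0 ≤ b) (hu : ∀ i ∈ s, 0 ≤ u i)
    (hδ : ∀ i ∈ s, 0 ≤ δ i) (h : ∀ i ∈ s, θ ≤ u i ^ a * δ i ^ b) :
    (#s : ℝ) ^ (a + b) * θ ≤ (∑ i ∈ s, u i) ^ a * (∑ i ∈ s, δ i) ^ b := by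
  set c := a + b
  have hc : 0 < c := by positivity
  have hroot : ∀ i ∈ s, θ ^ c⁻¹ ≤ u i ^ (a / c) * δ i ^ (b / c) := fun i hi => by
    rw [div_eq_mul_inv, div_eq_mul_inv, rpow_mul (hu i hi), rpow_mul (hδ i hi),
      ← mul_rpow (rpow_nonneg (hu i hi) a) (rpow_nonneg (hδ i hi) b)]
    exact rpow_le_rpow hθ (h i hi) (by positivity)
  have hholder : #s * θ ^ c⁻¹ ≤ (∑ i ∈ s, u i) ^ (a / c) * (∑ i ∈ s, δ i) ^ (b / c) := by
    refine le_trans ?_ (sum_rpow_mul_rpow_le s hu hδ (by positivity) (by positivity)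
      (by rw [← add_div, div_self hc.ne']))
    simpa using card_nsmul_le_sum s _ _ hroot
  have hSu := sum_nonneg hu
  have hSδ := sum_nonneg hδ
  convert rpow_le_rpow (by positivity) hholder hc.le using 1
  · rw [mul_rpow (by positivity) (by positivity), ← rpow_mul hθ, inv_mul_cancel₀ hc.ne',
      rpow_one]
  · rw [mul_rpow (by positivity) (by positivity), ← rpow_mul hSu, ← rpow_mul hSδ,
      div_mul_cancel₀ _ hc.ne', div_mul_cancel₀ _ hc.ne']

theorem sum_le_div_of_add_mul_le {E δ : ℕ → ℝ} {c : ℝ} (hc : 0 < c) (hE : ∀ k, 0 ≤ E k)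
    (h : ∀ j, E (j + 1) + c * δ j ≤ E j) (K : ℕ) : ∑ j ∈ range K, δ j ≤ E 0 / c := by
  have htel : ∑ j ∈ range K, c * δ j ≤ ∑ j ∈ range K, (E j - E (j + 1)) :=
    sum_le_sum fun j _ => by linarith [h j]
  rw [sum_range_sub', ← mul_sum] at htel
  rw [le_div_iff₀ hc]
  linarith [hE K]

theorem le_rpow_mul_rpow_of_sq_eq {p : ℕ} (hp : 1 ≤ p) {θ lam a A r : ℝ} (ha : 0 < a)
    (hA : 0 < A) (hr : 0 ≤ r) (ha2 : a ^ 2 = lam * A) (hls : θ ≤ lam * r ^ (p - 1)) :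
    θ ≤ (a * A ^ (1 / ((p : ℝ) + 1) - 1)) ^ ((p : ℝ) + 1) *
      (A * r ^ 2 / lam) ^ (((p : ℝ) - 1) / 2) := by
  obtain ⟨q, rfl⟩ : ∃ q, p = q + 1 := ⟨p - 1, by omega⟩
  have hlam : lam = a ^ 2 / A := by field_simp; linarith
  have hu : (a * A ^ (1 / ((↑(q + 1) : ℝ) + 1) - 1)) ^ ((↑(q + 1) : ℝ) + 1)
      = a ^ (q + 2) / A ^ (q + 1) := by
    have hexp : (1 / (↑(q + 2) : ℝ) - 1) * ↑(q + 2) = -↑(q + 1) := by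
      push_cast; field_simp; ring
    rw [show (↑(q + 1) : ℝ) + 1 = ↑(q + 2) by push_cast; ring, rpow_natCast, mul_pow,
      ← rpow_mul_natCast hA.le, hexp, rpow_neg hA.le, rpow_natCast, div_eq_mul_inv]
  have hδ : (A * r ^ 2 / lam) ^ (((↑(q + 1) : ℝ) - 1) / 2) = (A * r / a) ^ q := by
    rw [hlam, show A * r ^ 2 / (a ^ 2 / A) = (A * r / a) ^ 2 by field_simp,
      ← rpow_natCast _ 2, ← rpow_mul (by positivity), ← rpow_natCast]
    congr 1
    push_cast; ring
  rw [hu, hδ]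
  convert hls using 1
  rw [hlam, Nat.add_sub_cancel, div_pow]
  field_simp
  ring

theorem rpow_mul_le_of_large_step {p : ℕ} (hp : 1 ≤ p) {θ C : ℝ} (hθ : 0 < θ)
    {A lam r : ℕ → ℝ} (hA0 : A 0 = 1) (hA : StrictMono A)
    (ha2 : ∀ j, (A (j + 1) - A j) ^ 2 = lam j * A (j + 1)) (hr : ∀ j, 0 ≤ r j)
    (hls : ∀ j, θ ≤ lam j * r j ^ (p - 1))
    (hsum : ∀ K, ∑ j ∈ range K, A (j + 1) * r j ^ 2 / lam j ≤ C) (K : ℕ) :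
    θ * (K : ℝ) ^ ((3 * (p : ℝ) + 1) / 2) ≤
      ((p : ℝ) + 1) ^ ((p : ℝ) + 1) * C ^ (((p : ℝ) - 1) / 2) * A K := by
  have hP : (1 : ℝ) ≤ p := by exact_mod_cast hp
  set P : ℝ := (p : ℝ)
  have hApos : ∀ j, 0 < A j := fun j => one_pos.trans_le (hA0 ▸ hA.monotone (Nat.zero_le j))
  have hgap : ∀ j, 0 < A (j + 1) - A j := fun j => sub_pos.2 (hA j.lt_succ_self)
  have hlam : ∀ j, 0 < lam j := fun j =>
    pos_of_mul_pos_left (ha2 j ▸ pow_pos (hgap j) 2) (hApos _).le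
  set u : ℕ → ℝ := fun j => (A (j + 1) - A j) * A (j + 1) ^ (1 / (P + 1) - 1)
  set δ : ℕ → ℝ := fun j => A (j + 1) * r j ^ 2 / lam j
  have hu : ∀ j ∈ range K, 0 ≤ u j := fun j _ =>
    mul_nonneg (hgap j).le (rpow_nonneg (hApos _).le _)
  have hδ : ∀ j ∈ range K, 0 ≤ δ j := fun j _ =>
    div_nonneg (mul_nonneg (hApos _).le (sq_nonneg _)) (hlam j).le
  have hholder := card_rpow_mul_le_sum_rpow_mul_sum_rpow (range K) hθ.le
    (by linarith : 0 < P + 1) (by linarith : 0 ≤ (P - 1) / 2) hu hδ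
    fun j _ => le_rpow_mul_rpow_of_sq_eq hp (hgap j) (hApos _) (hr j) (ha2 j) (hls j)
  have husum : ∑ j ∈ range K, u j ≤ (P + 1) * A K ^ (1 / (P + 1)) := by
    have := sum_mul_rpow_sub_one_le (hApos 0) hA.monotone (s := 1 / (P + 1))
      (by positivity) (by rw [div_le_one (by linarith)]; linarith) K
    rw [hA0, one_rpow, one_div_mul_eq_div] at this
    exact (div_le_iff₀' (by linarith)).1 (this.trans (sub_le_self _ zero_le_one))
  have hAK := rpow_nonneg (hApos K).le (1 / (P + 1))
  calc θ * (K : ℝ) ^ ((3 * P + 1) / 2) = (#(range K) : ℝ) ^ (P + 1 + (P - 1) / 2) * θ := by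
        rw [card_range]; ring_nf
    _ ≤ (∑ j ∈ range K, u j) ^ (P + 1) * (∑ j ∈ range K, δ j) ^ ((P - 1) / 2) := hholder
    _ ≤ ((P + 1) * A K ^ (1 / (P + 1))) ^ (P + 1) * C ^ ((P - 1) / 2) :=
        mul_le_mul (rpow_le_rpow (sum_nonneg hu) husum (by linarith))
          (rpow_le_rpow (sum_nonneg hδ) (hsum K) (by linarith)) (rpow_nonneg (sum_nonneg hδ) _)
          (rpow_nonneg (mul_nonneg (by linarith) hAK) _)
    _ = (P + 1) ^ (P + 1) * C ^ ((P - 1) / 2) * A K := by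
        rw [mul_rpow (by linarith) hAK, ← rpow_mul (hApos K).le,
          one_div_mul_cancel (by linarith), rpow_one]
        ring

theorem inv_le_of_large_step {p : ℕ} (hp : 1 ≤ p) {θ C : ℝ} (hθ : 0 < θ)
    {A lam r : ℕ → ℝ} (hA0 : A 0 = 1) (hA : StrictMono A)
    (ha2 : ∀ j, (A (j + 1) - A j) ^ 2 = lam j * A (j + 1)) (hr : ∀ j, 0 ≤ r j)
    (hls : ∀ j, θ ≤ lam j * r j ^ (p - 1))
    (hsum : ∀ K, ∑ j ∈ range K, A (j + 1) * r j ^ 2 / lam j ≤ C) {K : ℕ} (hK : 1 ≤ K) :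
    (A K)⁻¹ ≤ (((p : ℝ) + 1) ^ ((3 * (p : ℝ) + 1) / 2) / θ) * C ^ (((p : ℝ) - 1) / 2) *
      (K : ℝ) ^ (-((3 * (p : ℝ) + 1) / 2)) := by
  have hgrowth := rpow_mul_le_of_large_step hp hθ hA0 hA ha2 hr hls hsum K
  have hP : (1 : ℝ) ≤ p := by exact_mod_cast hp
  have hAK : 0 < A K := one_pos.trans_le (hA0 ▸ hA.monotone (Nat.zero_le K))
  have hC : 0 ≤ C ^ (((p : ℝ) - 1) / 2) := rpow_nonneg (by simpa using hsum 0) _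
  have hKm : 0 < (K : ℝ) ^ ((3 * (p : ℝ) + 1) / 2) :=
    rpow_pos_of_pos (by exact_mod_cast hK) _
  calc (A K)⁻¹ ≤ ((p : ℝ) + 1) ^ ((3 * (p : ℝ) + 1) / 2) * C ^ (((p : ℝ) - 1) / 2) /
        (θ * (K : ℝ) ^ ((3 * (p : ℝ) + 1) / 2)) := by
        rw [inv_le_iff_one_le_mul₀ hAK, div_mul_eq_mul_div, one_le_div (by positivity)]
        exact hgrowth.trans (by gcongr <;> linarith)
    _ = _ := by
        rw [rpow_neg (Nat.cast_nonneg K)]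
        field_simp

theorem lyapunov_step {H : Type*} [NormedAddCommGroup H] [InnerProductSpace ℝ H] (Φ : H → ℝ)
    {xstar x x' v v' vt w : H} {A a lam ε σ : ℝ} (hA : 0 ≤ A) (ha : 0 ≤ a) (hlam : 0 < lam)
    (ha2 : a ^ 2 = lam * (A + a)) (hvt : A • x + a • v = (A + a) • vt) (hv' : v' = v - a • w)
    (hstar : Φ x' + ⟪xstar - x', w⟫ - ε ≤ Φ xstar) (hx : Φ x' + ⟪x - x', w⟫ - ε ≤ Φ x)
    (herr : ‖lam • w + x' - vt‖ ^ 2 + 2 * lam * ε ≤ σ ^ 2 * ‖x' - vt‖ ^ 2) :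
    (A + a) * (Φ x' - Φ xstar) + 1 / 2 * ‖v' - xstar‖ ^ 2
        + (1 - σ ^ 2) / 2 * ((A + a) * ‖x' - vt‖ ^ 2 / lam) ≤
      A * (Φ x - Φ xstar) + 1 / 2 * ‖v - xstar‖ ^ 2 := by
  have hv'_sq : ‖v' - xstar‖ ^ 2 = ‖v - xstar‖ ^ 2 - 2 * a * ⟪v - xstar, w⟫ + a ^ 2 * ‖w‖ ^ 2 := by
    rw [hv', sub_right_comm, norm_sub_sq_real, real_inner_smul_right, norm_smul,
      Real.norm_of_nonneg ha]
    ring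
  have herr_sq : ‖lam • w + x' - vt‖ ^ 2
      = lam ^ 2 * ‖w‖ ^ 2 + 2 * lam * ⟪x' - vt, w⟫ + ‖x' - vt‖ ^ 2 := by
    rw [add_sub_assoc, norm_add_sq_real, real_inner_smul_left, norm_smul,
      Real.norm_of_nonneg hlam.le, real_inner_comm]
    ring
  have hinner : A * ⟪x, w⟫ + a * ⟪v, w⟫ = (A + a) * ⟪vt, w⟫ := by
    simpa only [inner_add_left, real_inner_smul_left] using congrArg (⟪·, w⟫) hvt
  have hdiv : lam * ((A + a) * ‖x' - vt‖ ^ 2 / lam) = (A + a) * ‖x' - vt‖ ^ 2 := by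
    field_simp
  rw [hv'_sq]
  rw [herr_sq] at herr
  simp only [inner_sub_left] at hstar hx herr ⊢
  refine le_of_mul_le_mul_left ?_ (by positivity : 0 < 2 * lam)
  linear_combination 2 * lam * a * hstar + 2 * lam * A * hx + (A + a) * herr
    + (1 - σ ^ 2) * hdiv - 2 * lam * hinner + lam * ‖w‖ ^ 2 * ha2

theorem inv_eq_inv_add_div_of_rec {M : Type*} [AddCommGroup M] [Module ℝ M] {γ γ' α lam : ℝ}
    (hγ' : 0 < γ') (hrec : γ' = (1 - α) * γ) (hα : α ^ 2 = lam * ((1 - α) * γ)) (x v : M) :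
    γ'⁻¹ = γ⁻¹ + α / γ' ∧ (α / γ') ^ 2 = lam * (γ⁻¹ + α / γ') ∧
      γ⁻¹ • x + (α / γ') • v = (γ⁻¹ + α / γ') • ((1 - α) • x + α • v) := by
  have hγ : γ ≠ 0 := by rintro rfl; simp [hrec] at hγ'
  have hα1 : 1 - α ≠ 0 := by rintro h; simp [hrec, h] at hγ'
  have hinv : γ'⁻¹ = γ⁻¹ + α / γ' := by rw [hrec]; field_simp; ring
  refine ⟨hinv, ?_, ?_⟩
  · rw [← hinv, div_pow, hα, ← hrec]
    field_simp
  · rw [← hinv, smul_add, smul_smul, smul_smul, hrec]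
    congr 2 <;> field_simp

theorem stmt_16_general (d p : ℕ) (hp : 1 ≤ p)
    (Φ : EuclideanSpace ℝ (Fin d) → ℝ)
    (σ θ : ℝ) (hσ : σ ∈ Set.Ioo (0:ℝ) 1) (hθ : 0 < θ)
    (xstar : EuclideanSpace ℝ (Fin d)) (hstar : ∀ y, Φ xstar ≤ Φ y)
    (x v w vt : ℕ → EuclideanSpace ℝ (Fin d)) (γ eps lam α E : ℕ → ℝ)
    (hγ0 : γ 0 = 1) (hγpos : ∀ k : ℕ, 0 < γ k)
    (hlampos : ∀ k : ℕ, 0 < lam (k+1))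
    (hα : ∀ k : ℕ, α (k+1) ∈ Set.Ioo (0:ℝ) 1)
    (hαeq : ∀ k : ℕ, (α (k+1)) ^ 2 = lam (k+1) * ((1 - α (k+1)) * γ k))
    (hγ : ∀ k : ℕ, γ (k+1) = (1 - α (k+1)) * γ k)
    (hvt : ∀ k : ℕ, vt k = (1 - α (k+1)) • x k + α (k+1) • v k)
    (hw : ∀ k : ℕ, ∀ y : EuclideanSpace ℝ (Fin d),
      Φ (x (k+1)) + ⟪y - x (k+1), w (k+1)⟫ - eps (k+1) ≤ Φ y)
    (herr : ∀ k : ℕ,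
      ‖lam (k+1) • w (k+1) + x (k+1) - vt k‖ ^ 2 + 2 * lam (k+1) * eps (k+1) ≤
        σ ^ 2 * ‖x (k+1) - vt k‖ ^ 2)
    (hls : ∀ k : ℕ, θ ≤ lam (k+1) * ‖x (k+1) - vt k‖ ^ (p - 1))
    (hv : ∀ k : ℕ, v (k+1) = v k - (α (k+1) / γ (k+1)) • w (k+1))
    (hE : ∀ k : ℕ, E k = (1 / γ k) * (Φ (x k) - Φ xstar) + (1/2) * ‖v k - xstar‖ ^ 2) :
    ∀ k : ℕ, 1 ≤ k →
      γ k ≤ (((p:ℝ) + 1) ^ ((3 * (p:ℝ) + 1) / 2) / θ) *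
        (2 * E 0 / (1 - σ ^ 2)) ^ (((p:ℝ) - 1) / 2) *
        (k:ℝ) ^ (-((3 * (p:ℝ) + 1) / 2)) := by
  intro K hK
  have hweights (j : ℕ) := inv_eq_inv_add_div_of_rec (hγpos (j + 1)) (hγ j) (hαeq j) (x j) (v j)
  have hstep_pos (j : ℕ) : 0 < α (j + 1) / γ (j + 1) := div_pos (hα j).1 (hγpos (j + 1))
  have hdescent (j : ℕ) : E (j + 1) + (1 - σ ^ 2) / 2 *
      ((γ (j + 1))⁻¹ * ‖x (j + 1) - vt j‖ ^ 2 / lam (j + 1)) ≤ E j := by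
    obtain ⟨hinv, ha2, hvt'⟩ := hweights j
    rw [← hvt j] at hvt'
    have := lyapunov_step Φ (inv_pos.2 (hγpos j)).le (hstep_pos j).le (hlampos j) ha2 hvt'
      (hv j) (hw j xstar) (hw j (x j)) (herr j)
    rw [hE, hE, one_div (γ (j + 1)), one_div (γ j), hinv]
    linarith
  have hEnn (k : ℕ) : 0 ≤ E k := by
    rw [hE k]
    exact add_nonneg (mul_nonneg (one_div_pos.2 (hγpos k)).le (sub_nonneg.2 (hstar _)))
      (by positivity)
  have hσ2 : 0 < 1 - σ ^ 2 := by nlinarith [hσ.1, hσ.2]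
  have hsum (K : ℕ) : ∑ j ∈ range K, (γ (j + 1))⁻¹ * ‖x (j + 1) - vt j‖ ^ 2 / lam (j + 1) ≤
      2 * E 0 / (1 - σ ^ 2) :=
    (sum_le_div_of_add_mul_le (by positivity) hEnn hdescent K).trans_eq (by field_simp)
  have hmono : StrictMono fun k => (γ k)⁻¹ := strictMono_nat_of_lt_succ fun j => by
    simp only [(hweights j).1]
    linarith [hstep_pos j]
  simpa using inv_le_of_large_step hp hθ (lam := fun j => lam (j + 1)) (by simp [hγ0]) hmono
    (fun j => by simp only [(hweights j).1, add_sub_cancel_left]; exact (hweights j).2.1)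
    (fun j => norm_nonneg _) hls hsum hK

/-- for sequences generated by Algorithm II (with `E_0 > 0` when `p ≥ 2`),
`γ_k ≤ ((p+1)^{(3p+1)/2}/θ)(2E_0/(1−σ²))^{(p−1)/2} k^{−(3p+1)/2}` for all `k ≥ 1`. -/
theorem stmt_16 (d p : ℕ) (hd : 1 ≤ d) (hp : 1 ≤ p)
    (Φ : EuclideanSpace ℝ (Fin d) → ℝ)
    (hconv : ConvexOn ℝ Set.univ Φ) (hsmooth : ContDiff ℝ 2 Φ)
    (σ θ : ℝ) (hσ : σ ∈ Set.Ioo (0:ℝ) 1) (hθ : 0 < θ)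
    (xstar : EuclideanSpace ℝ (Fin d)) (hstar : ∀ y, Φ xstar ≤ Φ y)
    (x v w vt : ℕ → EuclideanSpace ℝ (Fin d)) (γ eps lam α E : ℕ → ℝ)
    (hproj : ∀ z : EuclideanSpace ℝ (Fin d), (∀ y, Φ z ≤ Φ y) → ‖v 0 - xstar‖ ≤ ‖v 0 - z‖)
    (hγ0 : γ 0 = 1) (hγpos : ∀ k : ℕ, 0 < γ k)
    (hlampos : ∀ k : ℕ, 0 < lam (k+1)) (hepsnn : ∀ k : ℕ, 0 ≤ eps (k+1))
    (hα : ∀ k : ℕ, α (k+1) ∈ Set.Ioo (0:ℝ) 1)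
    (hαeq : ∀ k : ℕ, (α (k+1)) ^ 2 = lam (k+1) * ((1 - α (k+1)) * γ k))
    (hγ : ∀ k : ℕ, γ (k+1) = (1 - α (k+1)) * γ k)
    (hvt : ∀ k : ℕ, vt k = (1 - α (k+1)) • x k + α (k+1) • v k)
    (hw : ∀ k : ℕ, ∀ y : EuclideanSpace ℝ (Fin d),
      Φ (x (k+1)) + ⟪y - x (k+1), w (k+1)⟫ - eps (k+1) ≤ Φ y)
    (herr : ∀ k : ℕ,
      ‖lam (k+1) • w (k+1) + x (k+1) - vt k‖ ^ 2 + 2 * lam (k+1) * eps (k+1) ≤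
        σ ^ 2 * ‖x (k+1) - vt k‖ ^ 2)
    (hls : ∀ k : ℕ, θ ≤ lam (k+1) * ‖x (k+1) - vt k‖ ^ (p - 1))
    (hv : ∀ k : ℕ, v (k+1) = v k - (α (k+1) / γ (k+1)) • w (k+1))
    (hE : ∀ k : ℕ, E k = (1 / γ k) * (Φ (x k) - Φ xstar) + (1/2) * ‖v k - xstar‖ ^ 2)
    -- extra assumption for p ≥ 2
    (hE0 : 2 ≤ p → 0 < E 0) :
    ∀ k : ℕ, 1 ≤ k →
      γ k ≤ (((p:ℝ) + 1) ^ ((3 * (p:ℝ) + 1) / 2) / θ) *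
        (2 * E 0 / (1 - σ ^ 2)) ^ (((p:ℝ) - 1) / 2) *
        (k:ℝ) ^ (-((3 * (p:ℝ) + 1) / 2)) :=
  stmt_16_general d p hp Φ σ θ hσ hθ xstar hstar x v w vt γ eps lam α E hγ0 hγpos hlampos hα hαeq hγ
    hvt hw herr hls hv hE
end
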